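/- arXiv:2009.03124 — 8 statements merged into one kernel-verified Lean document; each statement's English description precedes it below -/
import Mathlib

section
/- Let V and W be finite-dimensional complex vector spaces and let B : V × W → ℂ be a nondegenerate bilinear pairing (i.e. B(v,·) = 0 implies v = 0 and B(·,w) = 0 implies w = 0; in particular dim V = dim W). Let S : V → V and T : W → W be linear involutions (S ∘ S = id, T ∘ T = id) such that B(S v, T w) = −B(v, w) for all v ∈ V and w ∈ W. Then dim ker(S − id) + dim ker(T − id) = dim V. -/
open Module LinearMap

/-- Involution decomposition: the `+1` and `-1` eigenspaces are complementary. -/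
lemma aux_isCompl {V : Type*} [AddCommGroup V] [Module ℂ V]
    (f : V →ₗ[ℂ] V) (hf : f ∘ₗ f = LinearMap.id) :
    IsCompl (LinearMap.ker (f - LinearMap.id)) (LinearMap.ker (f + LinearMap.id)) := by
  have hff : ∀ v, f (f v) = v := fun v => congrArg (fun g => g v) hf
  constructor
  · rw [Submodule.disjoint_def]
    intro v hv hv'
    rw [LinearMap.mem_ker, LinearMap.sub_apply, LinearMap.id_apply, sub_eq_zero] at hv
    rw [LinearMap.mem_ker, LinearMap.add_apply, LinearMap.id_apply, add_eq_zero_iff_eq_neg] at hv'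
    have : (2 : ℂ) • v = 0 := by
      have := hv.symm.trans hv'
      rw [two_smul]
      rw [eq_neg_iff_add_eq_zero] at this
      exact this
    simpa using this
  · rw [codisjoint_iff, eq_top_iff]
    intro v _
    have h1 : (2 : ℂ)⁻¹ • (v + f v) ∈ LinearMap.ker (f - LinearMap.id) := by
      rw [LinearMap.mem_ker, LinearMap.sub_apply, LinearMap.id_apply, sub_eq_zero,
        map_smul, map_add, hff]
      rw [add_comm]
    have h2 : (2 : ℂ)⁻¹ • (v - f v) ∈ LinearMap.ker (f + LinearMap.id) := by
      rw [LinearMap.mem_ker, LinearMap.add_apply, LinearMap.id_apply, map_smul, map_sub, hff,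
        ← smul_add]
      rw [show f v - v + (v - f v) = 0 by abel, smul_zero]
    have : v = (2 : ℂ)⁻¹ • (v + f v) + (2 : ℂ)⁻¹ • (v - f v) := by
      rw [← smul_add, show v + f v + (v - f v) = (2 : ℂ) • v by rw [two_smul]; abel,
        smul_smul, inv_mul_cancel₀ (two_ne_zero), one_smul]
    rw [this]
    exact Submodule.add_mem_sup h1 h2

/-- Orthogonality bound: if `U` and `X` pair to zero under a right-nondegenerate pairing, then
`dim U + dim X ≤ dim W`. -/
lemma aux_ortho {V W : Type*} [AddCommGroup V] [Module ℂ V] [FiniteDimensional ℂ V]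
    [AddCommGroup W] [Module ℂ W] [FiniteDimensional ℂ W]
    (B : V →ₗ[ℂ] W →ₗ[ℂ] ℂ)
    (hB₂ : ∀ w : W, (∀ v : V, B v w = 0) → w = 0)
    (hVW : Module.finrank ℂ V = Module.finrank ℂ W)
    (U : Submodule ℂ V) (X : Submodule ℂ W)
    (hUX : ∀ u ∈ U, ∀ x ∈ X, B u x = 0) :
    Module.finrank ℂ U + Module.finrank ℂ X ≤ Module.finrank ℂ W := by
  set ψ : W →ₗ[ℂ] Module.Dual ℂ U := U.subtype.dualMap ∘ₗ B.flip with hψ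
  have hflip_inj : Function.Injective B.flip := by
    rw [← LinearMap.ker_eq_bot, LinearMap.ker_eq_bot']
    intro w hw
    exact hB₂ w fun v => congrArg (fun g => g v) hw
  have hflip_surj : Function.Surjective B.flip := by
    have hfr : Module.finrank ℂ W = Module.finrank ℂ (Module.Dual ℂ V) := by
      rw [Subspace.dual_finrank_eq, hVW]
    exact (LinearMap.injective_iff_surjective_of_finrank_eq_finrank hfr).mp hflip_inj
  have hψ_surj : Function.Surjective ψ :=
    (LinearMap.dualMap_surjective_of_injective U.injective_subtype).comp hflip_surj
  have hX : X ≤ LinearMap.ker ψ := by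
    intro x hx
    rw [LinearMap.mem_ker]
    ext u
    exact hUX u u.2 x hx
  have hrn : Module.finrank ℂ (LinearMap.range ψ) + Module.finrank ℂ (LinearMap.ker ψ)
      = Module.finrank ℂ W := LinearMap.finrank_range_add_finrank_ker ψ
  have hrange : Module.finrank ℂ (LinearMap.range ψ) = Module.finrank ℂ U := by
    rw [LinearMap.range_eq_top.mpr hψ_surj]
    rw [finrank_top, Subspace.dual_finrank_eq]
  have hXle : Module.finrank ℂ X ≤ Module.finrank ℂ (LinearMap.ker ψ) :=
    Submodule.finrank_mono hX
  omega

/-- Let `V` and `W` be finite-dimensional complex vector spaces and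
`B : V × W → ℂ` a nondegenerate bilinear pairing. Let `S : V → V` and `T : W → W` be linear
involutions such that `B (S v) (T w) = - B v w` for all `v, w`. Then
`dim ker (S - id) + dim ker (T - id) = dim V`. -/
theorem stmt_0
    (V W : Type*) [AddCommGroup V] [Module ℂ V] [FiniteDimensional ℂ V]
    [AddCommGroup W] [Module ℂ W] [FiniteDimensional ℂ W]
    (B : V →ₗ[ℂ] W →ₗ[ℂ] ℂ)
    (hB₁ : ∀ v : V, (∀ w : W, B v w = 0) → v = 0)
    (hB₂ : ∀ w : W, (∀ v : V, B v w = 0) → w = 0)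
    (S : V →ₗ[ℂ] V) (T : W →ₗ[ℂ] W)
    (hS : S ∘ₗ S = LinearMap.id) (hT : T ∘ₗ T = LinearMap.id)
    (h : ∀ (v : V) (w : W), B (S v) (T w) = - B v w) :
    Module.finrank ℂ (LinearMap.ker (S - LinearMap.id))
      + Module.finrank ℂ (LinearMap.ker (T - LinearMap.id))
      = Module.finrank ℂ V := by
  -- dim V = dim W
  have hB_inj : Function.Injective B := by
    rw [← LinearMap.ker_eq_bot, LinearMap.ker_eq_bot']
    intro v hv
    exact hB₁ v fun w => congrArg (fun g => g w) hv
  have hflip_inj : Function.Injective B.flip := by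
    rw [← LinearMap.ker_eq_bot, LinearMap.ker_eq_bot']
    intro w hw
    exact hB₂ w fun v => congrArg (fun g => g v) hw
  have hVW : Module.finrank ℂ V = Module.finrank ℂ W := by
    have h1 : Module.finrank ℂ V ≤ Module.finrank ℂ (Module.Dual ℂ W) :=
      LinearMap.finrank_le_finrank_of_injective hB_inj
    have h2 : Module.finrank ℂ W ≤ Module.finrank ℂ (Module.Dual ℂ V) :=
      LinearMap.finrank_le_finrank_of_injective hflip_inj
    rw [Subspace.dual_finrank_eq] at h1 h2
    omega
  -- eigenspace decompositions
  have hVdec := Submodule.finrank_add_eq_of_isCompl (aux_isCompl S hS)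
  have hWdec := Submodule.finrank_add_eq_of_isCompl (aux_isCompl T hT)
  -- orthogonality of the +1 eigenspaces
  have hmemS : ∀ v ∈ LinearMap.ker (S - LinearMap.id), S v = v := by
    intro v hv
    rw [LinearMap.mem_ker, LinearMap.sub_apply, LinearMap.id_apply, sub_eq_zero] at hv
    exact hv
  have hmemT : ∀ w ∈ LinearMap.ker (T - LinearMap.id), T w = w := by
    intro w hw
    rw [LinearMap.mem_ker, LinearMap.sub_apply, LinearMap.id_apply, sub_eq_zero] at hw
    exact hw
  have hmemS' : ∀ v ∈ LinearMap.ker (S + LinearMap.id), S v = -v := by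
    intro v hv
    rw [LinearMap.mem_ker, LinearMap.add_apply, LinearMap.id_apply,
      add_eq_zero_iff_eq_neg] at hv
    exact hv
  have hmemT' : ∀ w ∈ LinearMap.ker (T + LinearMap.id), T w = -w := by
    intro w hw
    rw [LinearMap.mem_ker, LinearMap.add_apply, LinearMap.id_apply,
      add_eq_zero_iff_eq_neg] at hw
    exact hw
  have h1 := aux_ortho B hB₂ hVW (LinearMap.ker (S - LinearMap.id))
    (LinearMap.ker (T - LinearMap.id)) (by
      intro u hu x hx
      have := h u x
      rw [hmemS u hu, hmemT x hx] at this
      have h2 : (2 : ℂ) * B u x = 0 := by rw [two_mul]; linear_combination this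
      simpa using h2)
  have h2 := aux_ortho B hB₂ hVW (LinearMap.ker (S + LinearMap.id))
    (LinearMap.ker (T + LinearMap.id)) (by
      intro u hu x hx
      have := h u x
      rw [hmemS' u hu, hmemT' x hx] at this
      simp only [map_neg, LinearMap.neg_apply, neg_neg] at this
      have h2 : (2 : ℂ) * B u x = 0 := by linear_combination this
      simpa using h2)
  omega
end

section
/- Let V be a finite-dimensional complex vector space equipped with a nondegenerate symmetric bilinear form Φ, and let A, B : V → V be linear involutions (A ∘ A = id, B ∘ B = id) that preserve Φ (i.e. Φ(A x, A y) = Φ(x, y) and Φ(B x, B y) = Φ(x, y) for all x, y). Then 2 · dim( ker(A − id) ∩ ker(B − id) ) = dim ker(A ∘ B − id) + dim ker(A − id) + dim ker(B − id) − dim V. -/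
/-!
Write `E±(A)` for the `±1`-eigenspaces of an involution `A`, so that `V = E₊(A) ⊕ E₋(A)`.
Since `A ∘ B = 1` exactly where `A = B`, the fixed space of `A ∘ B` splits as
`(E₊(A) ⊓ E₊(B)) ⊕ (E₋(A) ⊓ E₋(B))`. For an isometric involution `E₋(A)` is the orthogonal
of `E₊(A)`, so `E₋(A) ⊓ E₋(B)` is the orthogonal of `E₊(A) ⊔ E₊(B)`; its dimension is
`dim V - dim E₊(A) - dim E₊(B) + dim (E₊(A) ⊓ E₊(B))`, and adding up gives the formula.
-/

open Module LinearMap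

section Involution

variable {V : Type*} [AddCommGroup V]

lemma eq_zero_of_eq_neg (K : Type*) [Field K] [NeZero (2 : K)] [Module K V] {x : V}
    (h : x = -x) : x = 0 := by
  have h2x : (2 : K) • x = 0 := by
    rw [two_smul]
    nth_rewrite 2 [h]
    exact add_neg_cancel x
  exact (smul_eq_zero.mp h2x).resolve_left two_ne_zero

namespace LinearMap

section Ring

variable {R : Type*} [Ring R] [Module R V]

lemma mem_ker_sub_id {A : V →ₗ[R] V} {x : V} : x ∈ ker (A - id) ↔ A x = x := by
  simp [sub_eq_zero]

lemma mem_ker_add_id {A : V →ₗ[R] V} {x : V} : x ∈ ker (A + id) ↔ A x = -x := by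
  simp [add_eq_zero_iff_eq_neg]

lemma ker_comp_sub_id {A B : V →ₗ[R] V} (hA : A ∘ₗ A = id) :
    ker (A ∘ₗ B - id) = ker (A - B) := by
  have hA' (x : V) : A (A x) = x := LinearMap.congr_fun hA x
  ext x
  simp only [mem_ker, sub_apply, comp_apply, id_apply, sub_eq_zero]
  constructor
  · intro h
    rw [← hA' (B x), h]
  · intro h
    rw [← h, hA']

end Ring

variable {K : Type*} [Field K] [Module K V] [NeZero (2 : K)]

lemma disjoint_ker_sub_id_ker_add_id (A : V →ₗ[K] V) :
    Disjoint (ker (A - id)) (ker (A + id)) := by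
  rw [Submodule.disjoint_def]
  intro x hx₁ hx₂
  rw [mem_ker_sub_id] at hx₁
  rw [mem_ker_add_id, hx₁] at hx₂
  exact eq_zero_of_eq_neg K hx₂

/-- When `A x = B x`, the splitting `x = ½ (x + A x) + ½ (x - A x)` into `±1`-eigenvectors of `A`
is also one into `±1`-eigenvectors of `B`. -/
lemma ker_sub_eq_sup {A B : V →ₗ[K] V} (hA : A ∘ₗ A = id)
    (hB : B ∘ₗ B = id) :
    ker (A - B) = ker (A - id) ⊓ ker (B - id) ⊔ ker (A + id) ⊓ ker (B + id) := by
  have hA' (x : V) : A (A x) = x := LinearMap.congr_fun hA x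
  have hB' (x : V) : B (B x) = x := LinearMap.congr_fun hB x
  apply le_antisymm
  · intro x hx
    rw [mem_ker, sub_apply, sub_eq_zero] at hx
    refine Submodule.mem_sup.mpr
      ⟨(2⁻¹ : K) • (x + A x), ⟨?_, ?_⟩, (2⁻¹ : K) • (x - A x), ⟨?_, ?_⟩, ?_⟩
    · rw [SetLike.mem_coe, mem_ker_sub_id, map_smul, map_add, hA', add_comm]
    · rw [SetLike.mem_coe, mem_ker_sub_id, map_smul, map_add, hx, hB', add_comm]
    · rw [SetLike.mem_coe, mem_ker_add_id, map_smul, map_sub, hA', ← smul_neg, neg_sub]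
    · rw [SetLike.mem_coe, mem_ker_add_id, map_smul, map_sub, hx, hB', ← smul_neg, neg_sub]
    · rw [← smul_add, add_add_sub_cancel, ← two_smul K x, smul_smul,
        inv_mul_cancel₀ two_ne_zero, one_smul]
  · refine sup_le (fun x ⟨hxA, hxB⟩ => ?_) (fun x ⟨hxA, hxB⟩ => ?_)
    · rw [SetLike.mem_coe, mem_ker_sub_id] at hxA hxB
      rw [mem_ker, sub_apply, hxA, hxB, sub_self]
    · rw [SetLike.mem_coe, mem_ker_add_id] at hxA hxB
      rw [mem_ker, sub_apply, hxA, hxB, sub_self]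

variable [FiniteDimensional K V]

lemma finrank_ker_sub {A B : V →ₗ[K] V} (hA : A ∘ₗ A = id) (hB : B ∘ₗ B = id) :
    finrank K (ker (A - B)) = finrank K ↥(ker (A - id) ⊓ ker (B - id))
      + finrank K ↥(ker (A + id) ⊓ ker (B + id)) := by
  have hdisj : Disjoint (ker (A - id) ⊓ ker (B - id)) (ker (A + id) ⊓ ker (B + id)) :=
    (disjoint_ker_sub_id_ker_add_id A).mono inf_le_left inf_le_left
  have := Submodule.finrank_sup_add_finrank_inf_eq
    (ker (A - id) ⊓ ker (B - id)) (ker (A + id) ⊓ ker (B + id))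
  rwa [← ker_sub_eq_sup hA hB, hdisj.eq_bot, finrank_bot, add_zero] at this

lemma finrank_ker_sub_id_add_finrank_ker_add_id {A : V →ₗ[K] V} (hA : A ∘ₗ A = id) :
    finrank K (ker (A - id)) + finrank K (ker (A + id)) = finrank K V := by
  have := finrank_ker_sub hA hA
  rw [sub_self, ker_zero, finrank_top, inf_idem, inf_idem] at this
  exact this.symm

end LinearMap

end Involution

namespace LinearMap.BilinForm

lemma orthogonal_sup {R M : Type*} [CommRing R] [AddCommGroup M] [Module R M]
    (Φ : LinearMap.BilinForm R M) (N L : Submodule R M) :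
    Φ.orthogonal (N ⊔ L) = Φ.orthogonal N ⊓ Φ.orthogonal L := by
  refine le_antisymm (le_inf (orthogonal_le le_sup_left) (orthogonal_le le_sup_right)) ?_
  rintro x ⟨hxN, hxL⟩ y hy
  obtain ⟨n, hn, l, hl, rfl⟩ := Submodule.mem_sup.mp hy
  rw [map_add, LinearMap.add_apply, hxN n hn, hxL l hl, add_zero]

variable {K V : Type*} [Field K] [AddCommGroup V] [Module K V] [NeZero (2 : K)]

lemma ker_add_id_le_orthogonal {Φ : LinearMap.BilinForm K V}
    {A : V →ₗ[K] V}
    (hAΦ : ∀ x y, Φ (A x) (A y) = Φ x y) :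
    ker (A + id) ≤ Φ.orthogonal (ker (A - id)) := by
  intro x hx y hy
  rw [mem_ker_add_id] at hx
  rw [mem_ker_sub_id] at hy
  apply eq_zero_of_eq_neg K
  calc Φ y x = Φ (A y) (A x) := (hAΦ y x).symm
    _ = -Φ y x := by rw [hx, hy, map_neg]

variable [FiniteDimensional K V]

lemma ker_add_id_eq_orthogonal {Φ : LinearMap.BilinForm K V} (hΦ : Φ.Nondegenerate)
    {A : V →ₗ[K] V} (hA : A ∘ₗ A = id) (hAΦ : ∀ x y, Φ (A x) (A y) = Φ x y) :
    ker (A + id) = Φ.orthogonal (ker (A - id)) := by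
  refine Submodule.eq_of_le_of_finrank_le (ker_add_id_le_orthogonal hAΦ) ?_
  have := finrank_ker_sub_id_add_finrank_ker_add_id hA
  rw [finrank_orthogonal hΦ]
  omega

lemma finrank_ker_add_id_inf {Φ : LinearMap.BilinForm K V} (hΦ : Φ.Nondegenerate)
    {A B : V →ₗ[K] V} (hA : A ∘ₗ A = id) (hB : B ∘ₗ B = id)
    (hAΦ : ∀ x y, Φ (A x) (A y) = Φ x y) (hBΦ : ∀ x y, Φ (B x) (B y) = Φ x y) :
    finrank K ↥(ker (A + id) ⊓ ker (B + id))
      = finrank K V - finrank K ↥(ker (A - id) ⊔ ker (B - id)) := by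
  rw [ker_add_id_eq_orthogonal hΦ hA hAΦ, ker_add_id_eq_orthogonal hΦ hB hBΦ,
    ← orthogonal_sup, finrank_orthogonal hΦ]

end LinearMap.BilinForm

/-- Let `V` be a finite-dimensional complex vector space with a nondegenerate
symmetric bilinear form `Φ`, and `A B : V → V` linear involutions preserving `Φ`. Then
`2 * dim (ker (A - id) ⊓ ker (B - id))
  = dim ker (A ∘ B - id) + dim ker (A - id) + dim ker (B - id) - dim V`. -/
theorem stmt_3
    (V : Type*) [AddCommGroup V] [Module ℂ V] [FiniteDimensional ℂ V]
    (Φ : V →ₗ[ℂ] V →ₗ[ℂ] ℂ)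
    (hΦsymm : ∀ x y : V, Φ x y = Φ y x)
    (hΦnd : ∀ v : V, (∀ w : V, Φ v w = 0) → v = 0)
    (A B : V →ₗ[ℂ] V)
    (hA : A ∘ₗ A = LinearMap.id) (hB : B ∘ₗ B = LinearMap.id)
    (hAΦ : ∀ x y : V, Φ (A x) (A y) = Φ x y)
    (hBΦ : ∀ x y : V, Φ (B x) (B y) = Φ x y) :
    (2 * Module.finrank ℂ ↥(LinearMap.ker (A - LinearMap.id) ⊓ LinearMap.ker (B - LinearMap.id))
        : ℤ)
      = Module.finrank ℂ (LinearMap.ker (A ∘ₗ B - LinearMap.id))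
        + Module.finrank ℂ (LinearMap.ker (A - LinearMap.id))
        + Module.finrank ℂ (LinearMap.ker (B - LinearMap.id))
        - Module.finrank ℂ V := by
  have hΦ : Φ.Nondegenerate :=
    (IsRefl.nondegenerate_iff_separatingLeft fun x y h => (hΦsymm y x).trans h).mpr hΦnd
  have hfix := finrank_ker_sub hA hB
  have hneg := LinearMap.BilinForm.finrank_ker_add_id_inf hΦ hA hB hAΦ hBΦ
  have hgrass := Submodule.finrank_sup_add_finrank_inf_eq
    (ker (A - LinearMap.id)) (ker (B - LinearMap.id))
  have hsup_le := Submodule.finrank_le (ker (A - LinearMap.id) ⊔ ker (B - LinearMap.id))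
  rw [ker_comp_sub_id hA]
  omega
end

section
/- Let V be a finite-dimensional complex vector space and let ρ be a representation of the infinite dihedral group D_∞ (in Mathlib, DihedralGroup 0, generated by the reflections sr 0 and sr 1, which satisfy (sr 0)·(sr 1) = r 1) on V. Assume ρ preserves a nondegenerate symmetric bilinear form Φ on V (i.e. Φ(ρ(g)x, ρ(g)y) = Φ(x, y) for all g ∈ D_∞). Then 2 · dim H¹(D_∞, ρ) = dim V + dim ker(ρ(r 1) − id) − dim ker(ρ(sr 0) − id) − dim ker(ρ(sr 1) − id), where H¹ denotes first group cohomology with coefficients in ρ. -/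
/-!
`D_∞` is the free product of the two groups of order two generated by `s₀ = sr 0` and
`s₁ = sr 1`. Hence a 1-cocycle, viewed as a section `g ↦ (d g, g)` of `V ⋊ D_∞ → D_∞`, is
determined by its values at `s₀` and `s₁`, and these may be any vectors of the `-1`-eigenspaces
`V₀⁻`, `V₁⁻` of `ρ s₀`, `ρ s₁`: `dim Z¹ = dim V₀⁻ + dim V₁⁻`. The coboundaries have dimension
`dim V - dim (V₀⁺ ⊓ V₁⁺)`. An invariant nondegenerate form makes `Vᵢ⁺` the orthogonal of `Vᵢ⁻`, so
`V₀⁺ ⊓ V₁⁺ = (V₀⁻ ⊔ V₁⁻)ᗮ`, and altogether `dim H¹ = dim (V₀⁻ ⊓ V₁⁻)`. Finally the fixed space of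
`ρ (r 1) = ρ s₀ * ρ s₁` is `(V₀⁺ ⊓ V₁⁺) ⊕ (V₀⁻ ⊓ V₁⁻)`, and the formula is a dimension count.
-/

open DihedralGroup groupCohomology Module

universe u v

lemma mul_zpow_mul_of_mul_self_eq_one {H : Type*} [Group H] {a x : H} (ha : a * a = 1)
    (hx : a * x * a = x⁻¹) (n : ℤ) : a * x ^ n * a = x ^ (-n) := by
  have ha' : a⁻¹ = a := inv_eq_of_mul_eq_one_left ha
  calc a * x ^ n * a = a * x ^ n * a⁻¹ := by rw [ha']
    _ = (a * x * a⁻¹) ^ n := conj_zpow.symm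
    _ = x ^ (-n) := by rw [ha', hx, inv_zpow, zpow_neg]

section

variable {R M : Type*} [Ring R] [AddCommGroup M] [Module R M] {S : M →ₗ[R] M} {v : M}

lemma mem_ker_sub_id : v ∈ LinearMap.ker (S - LinearMap.id) ↔ S v = v := by
  simp [sub_eq_zero]

lemma mem_ker_add_id : v ∈ LinearMap.ker (S + LinearMap.id) ↔ S v = -v := by
  simp [add_eq_zero_iff_eq_neg]

end

section Involution

variable {k V : Type*} [Field k] [AddCommGroup V] [Module k V] {S T : V →ₗ[k] V}

lemma eq_zero_of_neg_eq_self [NeZero (2 : k)] {v : V} (h : -v = v) : v = 0 := by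
  have h2 : (2 : k) • v = 0 := by
    rw [two_smul]
    nth_rw 1 [← h]
    exact neg_add_cancel v
  exact (smul_eq_zero.1 h2).resolve_left two_ne_zero

lemma disjoint_ker_sub_id_ker_add_id [NeZero (2 : k)] (S : V →ₗ[k] V) :
    Disjoint (LinearMap.ker (S - LinearMap.id)) (LinearMap.ker (S + LinearMap.id)) := by
  rw [Submodule.disjoint_def]
  intro v hfix hanti
  rw [mem_ker_sub_id] at hfix
  rw [mem_ker_add_id] at hanti
  exact eq_zero_of_neg_eq_self (k := k) (hanti.symm.trans hfix)

lemma isCompl_ker_sub_id_ker_add_id [NeZero (2 : k)] (hS : Function.Involutive S) :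
    IsCompl (LinearMap.ker (S - LinearMap.id)) (LinearMap.ker (S + LinearMap.id)) := by
  refine ⟨disjoint_ker_sub_id_ker_add_id S, codisjoint_iff.2 (eq_top_iff.2 fun v _ => ?_)⟩
  refine Submodule.mem_sup.2 ⟨(2⁻¹ : k) • (v + S v), ?_, (2⁻¹ : k) • (v - S v), ?_, ?_⟩
  · exact Submodule.smul_mem _ _ (mem_ker_sub_id.2 (by rw [map_add, hS]; abel))
  · exact Submodule.smul_mem _ _ (mem_ker_add_id.2 (by rw [map_sub, hS]; abel))
  · rw [← smul_add, add_add_sub_cancel, ← two_smul k, smul_smul, inv_mul_cancel₀ two_ne_zero,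
      one_smul]

lemma finrank_ker_sub_id_add_finrank_ker_add_id [NeZero (2 : k)] [FiniteDimensional k V]
    (hS : Function.Involutive S) :
    finrank k (LinearMap.ker (S - LinearMap.id)) + finrank k (LinearMap.ker (S + LinearMap.id))
      = finrank k V :=
  Submodule.finrank_add_eq_of_isCompl (isCompl_ker_sub_id_ker_add_id hS)

/-- `S * T` fixes `v` iff `S v = T v`, and then `v = (v + T v) / 2 + (v - T v) / 2` splits `v`
into a vector fixed by both and one negated by both. -/
lemma ker_mul_sub_id_eq_sup [NeZero (2 : k)] (hS : Function.Involutive S)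
    (hT : Function.Involutive T) :
    LinearMap.ker (S * T - LinearMap.id)
      = LinearMap.ker (S - LinearMap.id) ⊓ LinearMap.ker (T - LinearMap.id)
        ⊔ LinearMap.ker (S + LinearMap.id) ⊓ LinearMap.ker (T + LinearMap.id) := by
  apply le_antisymm
  · intro v hv
    rw [mem_ker_sub_id, Module.End.mul_apply] at hv
    have hST : S v = T v := by rw [← hS (T v), hv]
    refine Submodule.mem_sup.2 ⟨(2⁻¹ : k) • (v + T v), ?_, (2⁻¹ : k) • (v - T v), ?_, ?_⟩
    · refine Submodule.smul_mem _ _ (Submodule.mem_inf.2 ⟨mem_ker_sub_id.2 ?_, mem_ker_sub_id.2 ?_⟩)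
      · rw [map_add, hST, hv, add_comm]
      · rw [map_add, hT, add_comm]
    · refine Submodule.smul_mem _ _ (Submodule.mem_inf.2 ⟨mem_ker_add_id.2 ?_, mem_ker_add_id.2 ?_⟩)
      · rw [map_sub, hST, hv, neg_sub]
      · rw [map_sub, hT, neg_sub]
    · rw [← smul_add, add_add_sub_cancel, ← two_smul k, smul_smul, inv_mul_cancel₀ two_ne_zero,
        one_smul]
  · rintro v hv
    obtain ⟨x, hx, y, hy, rfl⟩ := Submodule.mem_sup.1 hv
    obtain ⟨hSx, hTx⟩ := Submodule.mem_inf.1 hx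
    obtain ⟨hSy, hTy⟩ := Submodule.mem_inf.1 hy
    rw [mem_ker_sub_id] at hSx hTx ⊢
    rw [mem_ker_add_id] at hSy hTy
    rw [Module.End.mul_apply, map_add, map_add, hTx, hSx, hTy, map_neg, hSy, neg_neg]

lemma finrank_ker_mul_sub_id [NeZero (2 : k)] [FiniteDimensional k V]
    (hS : Function.Involutive S) (hT : Function.Involutive T) :
    finrank k (LinearMap.ker (S * T - LinearMap.id))
      = finrank k ↥(LinearMap.ker (S - LinearMap.id) ⊓ LinearMap.ker (T - LinearMap.id))
        + finrank k ↥(LinearMap.ker (S + LinearMap.id) ⊓ LinearMap.ker (T + LinearMap.id)) := by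
  have h := Submodule.finrank_sup_add_finrank_inf_eq
    (LinearMap.ker (S - LinearMap.id) ⊓ LinearMap.ker (T - LinearMap.id))
    (LinearMap.ker (S + LinearMap.id) ⊓ LinearMap.ker (T + LinearMap.id))
  rwa [← ker_mul_sub_id_eq_sup hS hT,
    disjoint_iff.1 ((disjoint_ker_sub_id_ker_add_id S).mono inf_le_left inf_le_left),
    finrank_bot, add_zero] at h

end Involution

section Orthogonal

variable {k V : Type*} [Field k] [AddCommGroup V] [Module k V] (B : LinearMap.BilinForm k V)

lemma LinearMap.BilinForm.orthogonal_sup_s4 (W₁ W₂ : Submodule k V) :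
    B.orthogonal (W₁ ⊔ W₂) = B.orthogonal W₁ ⊓ B.orthogonal W₂ := by
  refine le_antisymm (le_inf (orthogonal_le le_sup_left) (orthogonal_le le_sup_right)) ?_
  rintro v ⟨hv₁, hv₂⟩ w hw
  obtain ⟨w₁, hw₁, w₂, hw₂, rfl⟩ := Submodule.mem_sup.1 hw
  rw [map_add, LinearMap.add_apply, hv₁ w₁ hw₁, hv₂ w₂ hw₂, add_zero]

lemma LinearMap.BilinForm.finrank_add_finrank_orthogonal_of_separatingLeft
    [FiniteDimensional k V] (hB : B.SeparatingLeft) (W : Submodule k V) :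
    finrank k W + finrank k (B.orthogonal W) = finrank k V := by
  rw [finrank_add_finrank_orthogonal', LinearMap.separatingLeft_iff_ker_eq_bot.1 hB, inf_bot_eq,
    finrank_bot, add_zero]

variable {B} {S T : V →ₗ[k] V}

lemma ker_sub_id_le_orthogonal_ker_add_id [NeZero (2 : k)]
    (hSB : ∀ x y, B (S x) (S y) = B x y) :
    LinearMap.ker (S - LinearMap.id) ≤ B.orthogonal (LinearMap.ker (S + LinearMap.id)) := by
  intro v hv w hw
  have h := hSB w v
  rw [mem_ker_sub_id.1 hv, mem_ker_add_id.1 hw, map_neg, LinearMap.neg_apply] at h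
  exact eq_zero_of_neg_eq_self (k := k) h

lemma orthogonal_ker_add_id [NeZero (2 : k)] [FiniteDimensional k V] (hB : B.SeparatingLeft)
    (hS : Function.Involutive S) (hSB : ∀ x y, B (S x) (S y) = B x y) :
    B.orthogonal (LinearMap.ker (S + LinearMap.id)) = LinearMap.ker (S - LinearMap.id) := by
  refine (Submodule.eq_of_le_of_finrank_eq (ker_sub_id_le_orthogonal_ker_add_id hSB) ?_).symm
  have h₁ := finrank_ker_sub_id_add_finrank_ker_add_id hS
  have h₂ :=
    B.finrank_add_finrank_orthogonal_of_separatingLeft hB (LinearMap.ker (S + LinearMap.id))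
  omega

/-- `(ker (S + 1) ⊔ ker (T + 1))ᗮ = ker (S - 1) ⊓ ker (T - 1)`, counted with dimensions. -/
lemma finrank_ker_add_id_add_finrank_ker_add_id [NeZero (2 : k)] [FiniteDimensional k V]
    (hB : B.SeparatingLeft) (hS : Function.Involutive S) (hT : Function.Involutive T)
    (hSB : ∀ x y, B (S x) (S y) = B x y) (hTB : ∀ x y, B (T x) (T y) = B x y) :
    finrank k (LinearMap.ker (S + LinearMap.id)) + finrank k (LinearMap.ker (T + LinearMap.id))
        + finrank k ↥(LinearMap.ker (S - LinearMap.id) ⊓ LinearMap.ker (T - LinearMap.id))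
      = finrank k V
        + finrank k ↥(LinearMap.ker (S + LinearMap.id) ⊓ LinearMap.ker (T + LinearMap.id)) := by
  have horth := B.finrank_add_finrank_orthogonal_of_separatingLeft hB
    (LinearMap.ker (S + LinearMap.id) ⊔ LinearMap.ker (T + LinearMap.id))
  rw [B.orthogonal_sup_s4, orthogonal_ker_add_id hB hS hSB, orthogonal_ker_add_id hB hT hTB] at horth
  have hsup := Submodule.finrank_sup_add_finrank_inf_eq
    (LinearMap.ker (S + LinearMap.id)) (LinearMap.ker (T + LinearMap.id))
  omega

end Orthogonal

namespace DihedralGroup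

variable {H : Type*} [Group H]

lemma closure_sr_zero_sr_one :
    Subgroup.closure {sr 0, sr 1} = (⊤ : Subgroup (DihedralGroup 0)) := by
  have h0 : sr 0 ∈ Subgroup.closure {sr (0 : ZMod 0), sr 1} := Subgroup.subset_closure (by simp)
  have h1 : sr 1 ∈ Subgroup.closure {sr (0 : ZMod 0), sr 1} := Subgroup.subset_closure (by simp)
  have hr (n : ℤ) : r (n : ZMod 0) ∈ Subgroup.closure {sr (0 : ZMod 0), sr 1} := by
    have h := Subgroup.zpow_mem _ (Subgroup.mul_mem _ h0 h1) n
    rwa [sr_mul_sr, sub_zero, r_one_zpow] at h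
  refine (Subgroup.eq_top_iff' _).2 fun g => ?_
  cases g with
  | r n => exact hr n
  | sr n => simpa [sr_mul_r] using Subgroup.mul_mem _ h0 (hr n)

lemma hom_ext_zero {f g : DihedralGroup 0 →* H} (h0 : f (sr 0) = g (sr 0))
    (h1 : f (sr 1) = g (sr 1)) : f = g :=
  MonoidHom.eq_of_eqOn_dense closure_sr_zero_sr_one (by simp [Set.EqOn, h0, h1])

def liftZero (a b : H) (ha : a * a = 1) (hb : b * b = 1) : DihedralGroup 0 →* H where
  toFun
    | r n => (a * b) ^ (show ℤ from n)
    | sr n => a * (a * b) ^ (show ℤ from n)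
  map_one' := zpow_zero _
  map_mul' := by
    have hconj : ∀ n : ℤ, a * (a * b) ^ n * a = (a * b) ^ (-n) :=
      mul_zpow_mul_of_mul_self_eq_one ha (by
        rw [mul_inv_rev, inv_eq_of_mul_eq_one_left ha, inv_eq_of_mul_eq_one_left hb,
          ← mul_assoc, ha, one_mul])
    have h_r_sr (m n : ℤ) : a * (a * b) ^ (n - m) = (a * b) ^ m * (a * (a * b) ^ n) := by
      calc a * (a * b) ^ (n - m) = a * (a * (a * b) ^ m * a) * (a * b) ^ n := by
            rw [hconj, sub_eq_neg_add, zpow_add, mul_assoc]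
        _ = (a * b) ^ m * (a * (a * b) ^ n) := by
            simp only [← mul_assoc, ha, one_mul]
    have h_sr_sr (m n : ℤ) : (a * b) ^ (n - m) = a * (a * b) ^ m * (a * (a * b) ^ n) := by
      rw [← mul_assoc, hconj, sub_eq_neg_add, zpow_add]
    rintro (m | m) (n | n)
    · exact zpow_add (a * b) m n
    · exact h_r_sr m n
    · exact (congrArg (a * ·) (zpow_add (a * b) m n)).trans (mul_assoc _ _ _).symm
    · exact h_sr_sr m n

@[simp] lemma liftZero_sr_zero (a b : H) (ha : a * a = 1) (hb : b * b = 1) :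
    liftZero a b ha hb (sr 0) = a :=
  (congrArg (a * ·) (zpow_zero (a * b))).trans (mul_one a)

@[simp] lemma liftZero_sr_one (a b : H) (ha : a * a = 1) (hb : b * b = 1) :
    liftZero a b ha hb (sr 1) = b := by
  change a * (a * b) ^ (1 : ℤ) = b
  rw [zpow_one, ← mul_assoc, ha, one_mul]

lemma involutive_sr {k V : Type*} [CommSemiring k] [AddCommMonoid V] [Module k V] {n : ℕ}
    (ρ : Representation k (DihedralGroup n) V) (i : ZMod n) : Function.Involutive (ρ (sr i)) :=
  fun v => by rw [← Module.End.mul_apply, ← map_mul, sr_mul_self, map_one, Module.End.one_apply]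

lemma invariants_eq_inf {k V : Type*} [CommRing k] [AddCommGroup V] [Module k V]
    (ρ : Representation k (DihedralGroup 0) V) :
    ρ.invariants
      = LinearMap.ker (ρ (sr 0) - LinearMap.id) ⊓ LinearMap.ker (ρ (sr 1) - LinearMap.id) := by
  ext v
  simp only [Representation.mem_invariants, Submodule.mem_inf, mem_ker_sub_id]
  refine ⟨fun h => ⟨h _, h _⟩, fun ⟨h0, h1⟩ g => ?_⟩
  induction (closure_sr_zero_sr_one ▸ Subgroup.mem_top g :) using
    Subgroup.closure_induction with
  | mem g hg => rcases hg with rfl | rfl <;> assumption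
  | one => simp
  | mul g h _ _ hg hh => rw [map_mul, Module.End.mul_apply, hh, hg]
  | inv g _ hg =>
    calc ρ g⁻¹ v = ρ g⁻¹ (ρ g v) := by rw [hg]
      _ = v := by rw [← Module.End.mul_apply, ← map_mul, inv_mul_cancel, map_one,
        Module.End.one_apply]

end DihedralGroup

namespace Representation

variable {k G V : Type*} [CommRing k] [Group G] [AddCommGroup V] [Module k V]
  (ρ : Representation k G V)

/-- The action through which `Multiplicative V ⋊[ρ.toMulAut] G` is the affine group `V ⋊ G`. -/
def toMulAut : G →* MulAut (Multiplicative V) where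
  toFun g :=
    { toFun := fun x => .ofAdd (ρ g x.toAdd)
      invFun := fun x => .ofAdd (ρ g⁻¹ x.toAdd)
      left_inv := fun x => by simp [← Module.End.mul_apply, ← map_mul]
      right_inv := fun x => by simp [← Module.End.mul_apply, ← map_mul]
      map_mul' := fun x y => by simp }
  map_one' := by ext; simp
  map_mul' g h := by ext; simp

@[simp] lemma toMulAut_apply (g : G) (x : Multiplicative V) :
    ρ.toMulAut g x = .ofAdd (ρ g x.toAdd) := rfl

end Representation

namespace groupCohomology

section

variable {k G : Type u} {V : Type v} [CommRing k] [Group G] [AddCommGroup V] [Module k V]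
  {ρ : Representation k G V}

def cocycles₁.toSemidirectProductHom (d : cocycles₁ (Rep.of ρ)) :
    G →* Multiplicative V ⋊[ρ.toMulAut] G where
  toFun g := ⟨.ofAdd (d g), g⟩
  map_one' := SemidirectProduct.ext (by simp) rfl
  map_mul' g h := SemidirectProduct.ext
    (by simp [(mem_cocycles₁_iff (A := Rep.of ρ) d).1 d.2 g h, add_comm]) rfl

lemma mem_cocycles₁_of_semidirectProductHom (f : G →* Multiplicative V ⋊[ρ.toMulAut] G)
    (hf : ∀ g, (f g).right = g) : (fun g => (f g).left.toAdd) ∈ cocycles₁ (Rep.of ρ) := by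
  refine (mem_cocycles₁_iff _).2 fun g h => ?_
  simp [map_mul, SemidirectProduct.mul_left, hf, add_comm]

lemma cocycles₁_apply_mem_ker_add_id (d : cocycles₁ (Rep.of ρ)) {g : G} (hg : g * g = 1) :
    d g ∈ LinearMap.ker (ρ g + LinearMap.id) := by
  have h := (mem_cocycles₁_iff (A := Rep.of ρ) d).1 d.2 g g
  rw [hg, cocycles₁_map_one, Rep.of_ρ] at h
  exact LinearMap.mem_ker.2 h.symm

end

section

variable {k G : Type u} [Field k] [Group G] (A : Rep k G)

lemma finrank_coboundaries₁_add_finrank_invariants [FiniteDimensional k A] :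
    finrank k (coboundaries₁ A) + finrank k A.ρ.invariants = finrank k A := by
  rw [← d₀₁_ker_eq_invariants]
  exact LinearMap.finrank_range_add_finrank_ker (d₀₁ A).hom

lemma finrank_H1_add_finrank_coboundaries₁ [FiniteDimensional k (cocycles₁ A)] :
    finrank k (H1 A) + finrank k (coboundaries₁ A) = finrank k (cocycles₁ A) := by
  have hπ : Function.Surjective (H1π A).hom := (ModuleCat.epi_iff_surjective _).1 inferInstance
  have hker : LinearMap.ker (H1π A).hom = (coboundaries₁ A).comap (cocycles₁ A).subtype :=
    Submodule.ext H1π_eq_zero_iff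
  have h := LinearMap.finrank_range_add_finrank_ker (H1π A).hom
  rwa [LinearMap.range_eq_top.2 hπ, finrank_top, hker,
    (Submodule.comapSubtypeEquivOfLe (coboundaries₁_le_cocycles₁ A)).finrank_eq] at h

end

section

variable {k V : Type} [Field k] [AddCommGroup V] [Module k V]
  (ρ : Representation k (DihedralGroup 0) V)

def cocycles₁EvalReflections :
    cocycles₁ (Rep.of ρ) →ₗ[k]
      LinearMap.ker (ρ (sr 0) + LinearMap.id) × LinearMap.ker (ρ (sr 1) + LinearMap.id) :=
  LinearMap.prod
    (LinearMap.codRestrict _ ((LinearMap.proj (sr 0)).comp (cocycles₁ (Rep.of ρ)).subtype)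
      fun d => cocycles₁_apply_mem_ker_add_id d (sr_mul_self 0))
    (LinearMap.codRestrict _ ((LinearMap.proj (sr 1)).comp (cocycles₁ (Rep.of ρ)).subtype)
      fun d => cocycles₁_apply_mem_ker_add_id d (sr_mul_self 1))

lemma cocycles₁EvalReflections_injective : Function.Injective (cocycles₁EvalReflections ρ) := by
  intro d d' h
  have h0 : d (sr 0) = d' (sr 0) := congrArg (fun p => (p.1 : V)) h
  have h1 : d (sr 1) = d' (sr 1) := congrArg (fun p => (p.2 : V)) h
  have hext := DihedralGroup.hom_ext_zero (f := cocycles₁.toSemidirectProductHom d)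
    (g := cocycles₁.toSemidirectProductHom d')
    (SemidirectProduct.ext (congrArg Multiplicative.ofAdd h0) rfl)
    (SemidirectProduct.ext (congrArg Multiplicative.ofAdd h1) rfl)
  exact cocycles₁_ext fun g => congrArg (fun f => (f g).left.toAdd) hext

lemma cocycles₁EvalReflections_surjective :
    Function.Surjective (cocycles₁EvalReflections ρ) := by
  rintro ⟨⟨a, ha⟩, ⟨b, hb⟩⟩
  rw [LinearMap.mem_ker, LinearMap.add_apply, LinearMap.id_apply] at ha hb
  let α : Multiplicative V ⋊[ρ.toMulAut] DihedralGroup 0 := ⟨.ofAdd a, sr 0⟩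
  let β : Multiplicative V ⋊[ρ.toMulAut] DihedralGroup 0 := ⟨.ofAdd b, sr 1⟩
  have hα : α * α = 1 :=
    SemidirectProduct.ext (congrArg Multiplicative.ofAdd ((add_comm _ _).trans ha)) (sr_mul_self 0)
  have hβ : β * β = 1 :=
    SemidirectProduct.ext (congrArg Multiplicative.ofAdd ((add_comm _ _).trans hb)) (sr_mul_self 1)
  set f := DihedralGroup.liftZero α β hα hβ
  have hf : SemidirectProduct.rightHom.comp f = MonoidHom.id _ :=
    DihedralGroup.hom_ext_zero (by simp [f, α]) (by simp [f, β])
  refine ⟨⟨_, mem_cocycles₁_of_semidirectProductHom f (DFunLike.congr_fun hf)⟩, ?_⟩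
  ext
  · exact congrArg (fun x => x.left.toAdd) (DihedralGroup.liftZero_sr_zero α β hα hβ)
  · exact congrArg (fun x => x.left.toAdd) (DihedralGroup.liftZero_sr_one α β hα hβ)

instance [FiniteDimensional k V] : FiniteDimensional k (cocycles₁ (Rep.of ρ)) :=
  .of_injective _ (cocycles₁EvalReflections_injective ρ)

lemma finrank_cocycles₁_dihedralZero [FiniteDimensional k V] :
    finrank k (cocycles₁ (Rep.of ρ))
      = finrank k (LinearMap.ker (ρ (sr 0) + LinearMap.id))
        + finrank k (LinearMap.ker (ρ (sr 1) + LinearMap.id)) := by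
  rw [(LinearEquiv.ofBijective _ ⟨cocycles₁EvalReflections_injective ρ,
    cocycles₁EvalReflections_surjective ρ⟩).finrank_eq, finrank_prod]

lemma finrank_H1_dihedralZero [NeZero (2 : k)] [FiniteDimensional k V]
    (B : LinearMap.BilinForm k V) (hB : B.SeparatingLeft)
    (hρB : ∀ g x y, B (ρ g x) (ρ g y) = B x y) :
    finrank k (H1 (Rep.of ρ))
      = finrank k ↥(LinearMap.ker (ρ (sr 0) + LinearMap.id)
          ⊓ LinearMap.ker (ρ (sr 1) + LinearMap.id)) := by
  have hH := finrank_H1_add_finrank_coboundaries₁ (Rep.of ρ)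
  have hcob : finrank k (coboundaries₁ (Rep.of ρ)) + finrank k ρ.invariants = finrank k V :=
    finrank_coboundaries₁_add_finrank_invariants (Rep.of ρ)
  rw [DihedralGroup.invariants_eq_inf ρ] at hcob
  have hZ := finrank_cocycles₁_dihedralZero ρ
  have key := finrank_ker_add_id_add_finrank_ker_add_id hB (DihedralGroup.involutive_sr ρ 0)
    (DihedralGroup.involutive_sr ρ 1) (hρB _) (hρB _)
  omega

end

end groupCohomology

theorem stmt_4_general
    (V : Type) [AddCommGroup V] [Module ℂ V] [FiniteDimensional ℂ V]
    (ρ : Representation ℂ (DihedralGroup 0) V)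
    (Φ : V →ₗ[ℂ] V →ₗ[ℂ] ℂ)
    (hΦnd : ∀ v : V, (∀ w : V, Φ v w = 0) → v = 0)
    (hΦinv : ∀ (g : DihedralGroup 0) (x y : V), Φ (ρ g x) (ρ g y) = Φ x y) :
    (2 * Module.finrank ℂ (groupCohomology.H1 (Rep.of ρ)) : ℤ)
      = Module.finrank ℂ V
        + Module.finrank ℂ (LinearMap.ker (ρ (r (1 : ZMod 0)) - LinearMap.id))
        - Module.finrank ℂ (LinearMap.ker (ρ (sr (0 : ZMod 0)) - LinearMap.id))
        - Module.finrank ℂ (LinearMap.ker (ρ (sr (1 : ZMod 0)) - LinearMap.id)) := by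
  have hs₀ := DihedralGroup.involutive_sr ρ 0
  have hs₁ := DihedralGroup.involutive_sr ρ 1
  have hH1 := finrank_H1_dihedralZero ρ Φ hΦnd hΦinv
  have hr : ρ (r 1) = ρ (sr 0) * ρ (sr 1) := by rw [← map_mul, sr_mul_sr, sub_zero]
  have hfix := finrank_ker_mul_sub_id hs₀ hs₁
  rw [← hr] at hfix
  have h₀ := finrank_ker_sub_id_add_finrank_ker_add_id hs₀
  have h₁ := finrank_ker_sub_id_add_finrank_ker_add_id hs₁
  have horth := finrank_ker_add_id_add_finrank_ker_add_id hΦnd hs₀ hs₁ (hΦinv _) (hΦinv _)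
  omega

/-- Let `ρ` be a representation of the infinite dihedral group
`D_∞ = DihedralGroup 0` on a finite-dimensional complex vector space `V`, preserving a
nondegenerate symmetric bilinear form `Φ`. Then
`2 * dim H¹(D_∞, ρ) = dim V + dim ker (ρ (r 1) - id) - dim ker (ρ (sr 0) - id)
  - dim ker (ρ (sr 1) - id)`. -/
theorem stmt_4
    (V : Type) [AddCommGroup V] [Module ℂ V] [FiniteDimensional ℂ V]
    (ρ : Representation ℂ (DihedralGroup 0) V)
    (Φ : V →ₗ[ℂ] V →ₗ[ℂ] ℂ)
    (hΦsymm : ∀ x y : V, Φ x y = Φ y x)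
    (hΦnd : ∀ v : V, (∀ w : V, Φ v w = 0) → v = 0)
    (hΦinv : ∀ (g : DihedralGroup 0) (x y : V), Φ (ρ g x) (ρ g y) = Φ x y) :
    (2 * Module.finrank ℂ (groupCohomology.H1 (Rep.of ρ)) : ℤ)
      = Module.finrank ℂ V
        + Module.finrank ℂ (LinearMap.ker (ρ (r (1 : ZMod 0)) - LinearMap.id))
        - Module.finrank ℂ (LinearMap.ker (ρ (sr (0 : ZMod 0)) - LinearMap.id))
        - Module.finrank ℂ (LinearMap.ker (ρ (sr (1 : ZMod 0)) - LinearMap.id)) :=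
  stmt_4_general V ρ Φ hΦnd hΦinv
end

section
/- Let k ≥ 1 and let ρ be a representation of the finite dihedral group D_{2k} of order 2k (in Mathlib, DihedralGroup k, generated by the reflections sr 0 and sr 1, which satisfy (sr 0)·(sr 1) = r 1, a rotation of order k) on a finite-dimensional complex vector space V. Let V^{D_{2k}} = {v ∈ V : ρ(g)v = v for all g ∈ D_{2k}}. Then 2 · dim V^{D_{2k}} = dim ker(ρ(r 1) − id) + dim ker(ρ(sr 0) − id) + dim ker(ρ(sr 1) − id) − dim V. -/
open DihedralGroup Finset LinearMap

lemma stmt5_sum_range_add {M : Type*} [AddCommMonoid M] (f : ℕ → M) (m n : ℕ) :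
    ∑ i ∈ range (m + n), f i = (∑ i ∈ range m, f i) + ∑ i ∈ range n, f (m + i) := by
  induction n with
  | zero => simp
  | succ n ih => rw [← Nat.add_assoc, Finset.sum_range_succ, ih, Finset.sum_range_succ, add_assoc]

lemma stmt5_sum_even_odd {M : Type*} [AddCommMonoid M] (f : ℕ → M) (n : ℕ) :
    ∑ i ∈ range (2 * n), f i = ∑ a ∈ range n, (f (2 * a) + f (2 * a + 1)) := by
  induction n with
  | zero => simp
  | succ n ih =>
      have h2 : 2 * (n + 1) = (2 * n + 1) + 1 := by ring
      rw [h2, Finset.sum_range_succ, Finset.sum_range_succ, ih, Finset.sum_range_succ, add_assoc]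

lemma stmt5_zmod_sum (k : ℕ) [NeZero k] (F : ZMod k → ℂ) :
    ∑ i : ZMod k, F i = ∑ j ∈ Finset.range k, F (j : ZMod k) := by
  refine Finset.sum_nbij' (fun i => (ZMod.val i : ℕ)) (fun j => (j : ZMod k)) ?_ ?_ ?_ ?_ ?_
  · intro a _; exact Finset.mem_range.mpr (ZMod.val_lt a)
  · intro a _; exact Finset.mem_univ _
  · intro a _; exact ZMod.natCast_rightInverse a
  · intro a ha; exact ZMod.val_cast_of_lt (Finset.mem_range.mp ha)
  · intro a _; rw [ZMod.natCast_rightInverse a]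

section Rep
variable {V : Type} [AddCommGroup V] [Module ℂ V] [FiniteDimensional ℂ V]

omit [FiniteDimensional ℂ V] in
lemma stmt5_trace_conj {G : Type*} [Group G] (ρ : Representation ℂ G V)
    (g h h' : G) (hh : h' * h = 1) :
    LinearMap.trace ℂ V (ρ (h * g * h')) = LinearMap.trace ℂ V (ρ g) := by
  rw [mul_assoc, map_mul, LinearMap.trace_mul_comm, ← map_mul, mul_assoc, hh, mul_one]

lemma stmt5_key (f : V →ₗ[ℂ] V) (n : ℕ) (hn : 0 < n) (hf : f ^ n = 1) :
    (n : ℂ) * (Module.finrank ℂ (LinearMap.ker (f - LinearMap.id)) : ℂ)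
      = ∑ j ∈ range n, LinearMap.trace ℂ V (f ^ j) := by
  have hn' : (n : ℂ) ≠ 0 := Nat.cast_ne_zero.mpr hn.ne'
  set S : V →ₗ[ℂ] V := ∑ j ∈ range n, f ^ j with hS
  have hshift : f * S = S := by
    rcases Nat.exists_eq_succ_of_ne_zero hn.ne' with ⟨m, rfl⟩
    rw [hS, Finset.mul_sum]
    simp_rw [← pow_succ']
    rw [Finset.sum_range_succ, Finset.sum_range_succ', hf]
    simp
  set p : V →ₗ[ℂ] V := (n : ℂ)⁻¹ • S with hp
  have hfp : f * p = p := by rw [hp, mul_smul_comm, hshift]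
  have hfix : ∀ x ∈ LinearMap.ker (f - LinearMap.id), ∀ j : ℕ, (f ^ j) x = x := by
    intro x hx j
    have hx' : f x = x := by
      have := LinearMap.mem_ker.mp hx
      simpa [sub_eq_zero] using this
    induction j with
    | zero => simp
    | succ j ih => rw [pow_succ', Module.End.mul_apply, ih, hx']
  have hproj : LinearMap.IsProj (LinearMap.ker (f - LinearMap.id)) p := by
    constructor
    · intro x
      rw [LinearMap.mem_ker, LinearMap.sub_apply, LinearMap.id_apply, sub_eq_zero,
        ← Module.End.mul_apply, hfp]
    · intro x hx
      rw [hp]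
      have hSx : S x = (n : ℕ) • x := by
        rw [hS, LinearMap.sum_apply]
        rw [Finset.sum_congr rfl fun j hj => hfix x hx j]
        simp [Finset.card_range]
      simp only [LinearMap.smul_apply, hSx, ← Nat.cast_smul_eq_nsmul ℂ, smul_smul]
      rw [inv_mul_cancel₀ hn', one_smul]
  have htr := hproj.trace
  have htrp : LinearMap.trace ℂ V p = (n : ℂ)⁻¹ * ∑ j ∈ range n, LinearMap.trace ℂ V (f ^ j) := by
    rw [hp, map_smul, hS, map_sum, smul_eq_mul]
  rw [htrp] at htr
  field_simp at htr
  rw [htr]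

end Rep

/-- Let `k ≥ 1` and `ρ` a representation of the dihedral group `D_{2k}` of
order `2k` on a finite-dimensional complex vector space `V`. Then
`2 * dim V^{D_{2k}} = dim ker (ρ (r 1) - id) + dim ker (ρ (sr 0) - id)
  + dim ker (ρ (sr 1) - id) - dim V`. -/
theorem stmt_5
    (k : ℕ) (hk : 1 ≤ k)
    (V : Type) [AddCommGroup V] [Module ℂ V] [FiniteDimensional ℂ V]
    (ρ : Representation ℂ (DihedralGroup k) V) :
    (2 * Module.finrank ℂ (Representation.invariants ρ) : ℤ)
      = Module.finrank ℂ (LinearMap.ker (ρ (r (1 : ZMod k)) - LinearMap.id))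
        + Module.finrank ℂ (LinearMap.ker (ρ (sr (0 : ZMod k)) - LinearMap.id))
        + Module.finrank ℂ (LinearMap.ker (ρ (sr (1 : ZMod k)) - LinearMap.id))
        - Module.finrank ℂ V := by
  haveI : NeZero k := ⟨by omega⟩
  have hk0 : (k : ℂ) ≠ 0 := Nat.cast_ne_zero.mpr (by omega)
  have hcard : (Fintype.card (DihedralGroup k) : ℂ) = 2 * k := by
    rw [DihedralGroup.card]; push_cast; ring
  haveI : Invertible (Fintype.card (DihedralGroup k) : ℂ) :=
    invertibleOfNonzero (by rw [hcard]; exact mul_ne_zero two_ne_zero hk0)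
  set T : DihedralGroup k → ℂ := fun g => LinearMap.trace ℂ V (ρ g) with hT
  -- conjugation facts
  have hconj0 : ∀ a : ZMod k, T (sr (2 * a)) = T (sr 0) := by
    intro a
    have he : r (-a) * sr 0 * r a = sr (2 * a) := by
      rw [r_mul_sr, sr_mul_r]; congr 1; ring
    have h1 : r a * r (-a) = 1 := by rw [r_mul_r, add_neg_cancel]; exact one_def.symm
    rw [← he]; exact stmt5_trace_conj ρ (sr 0) (r (-a)) (r a) h1
  have hconj1 : ∀ a : ZMod k, T (sr (2 * a + 1)) = T (sr 1) := by
    intro a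
    have he : r (-a) * sr 1 * r a = sr (2 * a + 1) := by
      rw [r_mul_sr, sr_mul_r]; congr 1; ring
    have h1 : r a * r (-a) = 1 := by rw [r_mul_r, add_neg_cancel]; exact one_def.symm
    rw [← he]; exact stmt5_trace_conj ρ (sr 1) (r (-a)) (r a) h1
  -- invariants
  have hproj := (Representation.isProj_averageMap ρ).trace
  have havg : LinearMap.trace ℂ V (ρ.averageMap)
      = ⅟(Fintype.card (DihedralGroup k) : ℂ) * ∑ g, T g := by
    simp only [Representation.averageMap, GroupAlgebra.average, map_smul, map_sum,
      MonoidAlgebra.of_apply, Representation.asAlgebraHom_single, one_smul, smul_eq_mul, hT]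
  have hE1 : (Fintype.card (DihedralGroup k) : ℂ)
      * (Module.finrank ℂ (Representation.invariants ρ) : ℂ) = ∑ g, T g := by
    rw [← hproj, havg, mul_invOf_cancel_left]
  -- split the sum over the group
  let e : ZMod k ⊕ ZMod k ≃ DihedralGroup k :=
    { toFun := fun x => match x with | .inl i => r i | .inr i => sr i
      invFun := fun g => match g with | r i => .inl i | sr i => .inr i
      left_inv := by rintro (i | i) <;> rfl
      right_inv := by rintro (i | i) <;> rfl }
  have hsplit : ∑ g, T g = (∑ i : ZMod k, T (r i)) + ∑ i : ZMod k, T (sr i) := by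
    rw [← Fintype.sum_equiv e (fun x => T (e x)) T (fun x => rfl), Fintype.sum_sum_type]
    rfl
  -- rotation kernel
  have hfk : (ρ (r (1 : ZMod k))) ^ k = 1 := by rw [← map_pow, r_one_pow_n, map_one]
  have hE2 := stmt5_key (ρ (r (1 : ZMod k))) k (by omega) hfk
  have hE2' : (k : ℂ) * (Module.finrank ℂ
        (LinearMap.ker (ρ (r (1 : ZMod k)) - LinearMap.id)) : ℂ)
      = ∑ j ∈ range k, T (r (j : ZMod k)) := by
    rw [hE2]
    exact Finset.sum_congr rfl fun j _ => by rw [← map_pow, r_one_pow]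
  -- reflection kernels
  have hsq0 : (ρ (sr (0 : ZMod k))) ^ 2 = 1 := by
    rw [pow_two, ← map_mul, sr_mul_self, map_one]
  have hsq1 : (ρ (sr (1 : ZMod k))) ^ 2 = 1 := by
    rw [pow_two, ← map_mul, sr_mul_self, map_one]
  have hE3 := stmt5_key (ρ (sr (0 : ZMod k))) 2 two_pos hsq0
  have hE4 := stmt5_key (ρ (sr (1 : ZMod k))) 2 two_pos hsq1
  rw [Finset.sum_range_succ, Finset.sum_range_one, pow_zero, pow_one,
    LinearMap.trace_one] at hE3 hE4
  -- sum over reflections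
  have hE5 : 2 * (∑ j ∈ range k, T (sr (j : ZMod k))) = (k : ℂ) * (T (sr 0) + T (sr 1)) := by
    have hper : ∀ j : ℕ, T (sr ((k + j : ℕ) : ZMod k)) = T (sr (j : ZMod k)) := by
      intro j; push_cast; rw [ZMod.natCast_self]; ring_nf
    have hdouble : ∑ j ∈ range (2 * k), T (sr ((j : ℕ) : ZMod k))
        = 2 * ∑ j ∈ range k, T (sr ((j : ℕ) : ZMod k)) := by
      rw [two_mul, stmt5_sum_range_add, two_mul]
      congr 1
      exact Finset.sum_congr rfl fun j _ => hper j
    have heo : ∑ j ∈ range (2 * k), T (sr ((j : ℕ) : ZMod k))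
        = ∑ a ∈ range k, (T (sr 0) + T (sr 1)) := by
      rw [stmt5_sum_even_odd]
      refine Finset.sum_congr rfl fun a _ => ?_
      have h1 : ((2 * a : ℕ) : ZMod k) = 2 * (a : ZMod k) := by push_cast; ring
      have h2 : ((2 * a + 1 : ℕ) : ZMod k) = 2 * (a : ZMod k) + 1 := by push_cast; ring
      rw [h1, h2, hconj0, hconj1]
    rw [← hdouble, heo, Finset.sum_const, Finset.card_range, nsmul_eq_mul]
  -- assemble
  have hZr := stmt5_zmod_sum k (fun i => T (r i))
  have hZs := stmt5_zmod_sum k (fun i => T (sr i))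
  rw [hsplit, hZr, hZs, hcard] at hE1
  have h2k : (2 * k : ℂ) ≠ 0 := mul_ne_zero two_ne_zero hk0
  have key : (2 * (k : ℂ))
        * (2 * (Module.finrank ℂ (Representation.invariants ρ) : ℂ))
      = (2 * (k : ℂ)) *
        ((Module.finrank ℂ (LinearMap.ker (ρ (r (1 : ZMod k)) - LinearMap.id)) : ℂ)
          + (Module.finrank ℂ (LinearMap.ker (ρ (sr (0 : ZMod k)) - LinearMap.id)) : ℂ)
          + (Module.finrank ℂ (LinearMap.ker (ρ (sr (1 : ZMod k)) - LinearMap.id)) : ℂ)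
          - (Module.finrank ℂ V : ℂ)) := by
    linear_combination 2 * hE1 - 2 * hE2' - (k : ℂ) * hE3 - (k : ℂ) * hE4 + hE5
  have hfin := mul_left_cancel₀ h2k key
  have hgoal : ((2 * Module.finrank ℂ (Representation.invariants ρ) : ℤ) : ℂ)
      = (((Module.finrank ℂ (LinearMap.ker (ρ (r (1 : ZMod k)) - LinearMap.id))
        + Module.finrank ℂ (LinearMap.ker (ρ (sr (0 : ZMod k)) - LinearMap.id))
        + Module.finrank ℂ (LinearMap.ker (ρ (sr (1 : ZMod k)) - LinearMap.id))
        - Module.finrank ℂ V : ℤ)) : ℂ) := by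
    push_cast
    linear_combination hfin
  exact_mod_cast hgoal
end

section
/- Let k ≥ 1 and n ≥ 1 be integers, and write n = q·k + r with q, r ∈ ℕ and 0 ≤ r < k (Euclidean division). Let ω ∈ ℂ be a primitive k-th root of unity and let D be the n×n diagonal matrix with diagonal entries D_{ii} = ω^i for i = 0, 1, …, n−1. Then the complex vector space { X ∈ M_n(ℂ) : trace(X) = 0 and D·X = X·D } has dimension q·n + (q+1)·r − 1. -/
/-!
A matrix commutes with `diagonal d` iff its `(i, j)` entry vanishes whenever `d i ≠ d j`, so the
commutant has dimension `#{(i, j) | d i = d j}`. For `d i = ω ^ i` this condition is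
`i ≡ j [MOD k]`, and the residue class of `c < k` meets `[0, n)` in `q + [c < r]` points, giving
`∑_{c < k} (q + [c < r]) ^ 2 = q * n + (q + 1) * r` pairs. The identity commutes with `D` and has
trace `n ≠ 0`, so imposing trace zero cuts the dimension by exactly one.
-/

open Finset Matrix Module LinearMap

section Commutant

variable {K ι : Type*} [Field K] [Fintype ι] [DecidableEq ι]

theorem mem_ker_mulLeft_sub_mulRight_diagonal_iff (d : ι → K) (X : Matrix ι ι K) :
    X ∈ ker (mulLeft K (diagonal d) - mulRight K (diagonal d)) ↔
      ∀ i j, d i ≠ d j → X i j = 0 := by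
  rw [mem_ker, LinearMap.sub_apply, mulLeft_apply, mulRight_apply, sub_eq_zero, ← Matrix.ext_iff]
  refine forall₂_congr fun i j => ?_
  rw [diagonal_mul, mul_diagonal, mul_comm (d i), mul_eq_mul_left_iff, or_iff_not_imp_left]

theorem finrank_ker_mulLeft_sub_mulRight_diagonal [DecidableEq K] (d : ι → K) :
    finrank K (ker (mulLeft K (diagonal d) - mulRight K (diagonal d))) =
      #{p : ι × ι | d p.1 = d p.2} := by
  let π : Matrix ι ι K →ₗ[K] {p : ι × ι // d p.1 ≠ d p.2} → K :=
    { toFun X p := X p.1.1 p.1.2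
      map_add' _ _ := rfl
      map_smul' _ _ := rfl }
  have hker : ker (mulLeft K (diagonal d) - mulRight K (diagonal d)) = ker π := by
    ext X
    rw [mem_ker_mulLeft_sub_mulRight_diagonal_iff, mem_ker]
    exact ⟨fun h => funext fun p => h _ _ p.2, fun h i j hij => congrFun h ⟨(i, j), hij⟩⟩
  have hsurj : Function.Surjective π := fun f =>
    ⟨fun i j => Function.extend Subtype.val f 0 (i, j),
      funext fun p => Subtype.val_injective.extend_apply f 0 p⟩
  have hrank := π.finrank_range_add_finrank_ker
  rw [range_eq_top.2 hsurj, finrank_top, finrank_fintype_fun_eq_card, Fintype.card_subtype,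
    finrank_matrix, finrank_self, mul_one, ← hker] at hrank
  have hsplit : #{p : ι × ι | d p.1 = d p.2} + #{p : ι × ι | d p.1 ≠ d p.2} =
      Fintype.card ι * Fintype.card ι := by
    rw [card_filter_add_card_filter_not, card_univ, Fintype.card_prod]
  omega

theorem Module.Dual.finrank_inf_ker_add_one {V : Type*} [AddCommGroup V] [Module K V]
    [FiniteDimensional K V] (f : Dual K V) {W : Submodule K V} {w : V} (hw : w ∈ W)
    (hfw : f w ≠ 0) :
    finrank K ↥(ker f ⊓ W) + 1 = finrank K W := by
  have hf : f.domRestrict W ≠ 0 := fun h => hfw (by simpa using congr($h ⟨w, hw⟩))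
  rw [← Module.Dual.finrank_ker_add_one_of_ne_zero hf, ker_domRestrict, inf_comm,
    ← Submodule.map_comap_subtype, Submodule.finrank_map_subtype_eq]

end Commutant

theorem card_filter_apply_eq_apply_eq_sum_sq {α β : Type*} [Fintype α] [DecidableEq β]
    (f : α → β) (t : Finset β) (ht : ∀ a, f a ∈ t) :
    #{p : α × α | f p.1 = f p.2} = ∑ b ∈ t, #{a | f a = b} ^ 2 := by
  rw [card_eq_sum_card_fiberwise (f := fun p => f p.1) (fun p _ => ht p.1)]
  refine sum_congr rfl fun b _ => ?_
  rw [filter_filter, sq, ← card_product]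
  congr 1
  ext p
  simp only [mem_filter, mem_univ, true_and, mem_product]
  constructor
  · rintro ⟨h12, h1⟩; exact ⟨h1, h12 ▸ h1⟩
  · rintro ⟨h1, h2⟩; exact ⟨h1.trans h2.symm, h1⟩

theorem Fin.card_filter_univ_val_eq_count (p : ℕ → Prop) [DecidablePred p] (n : ℕ) :
    #{i : Fin n | p i} = Nat.count p n := by
  rw [Nat.count_eq_card_filter_range, ← Nat.Iio_eq_range, ← Fin.map_valEmbedding_univ,
    filter_map, card_map]
  rfl

theorem sum_range_add_sq_ite_lt (q r m : ℕ) :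
    ∑ c ∈ range (r + m), (q + if c < r then 1 else 0) ^ 2 = r * (q + 1) ^ 2 + m * q ^ 2 := by
  have hlow : ∀ c ∈ range r, (q + if c < r then 1 else 0) ^ 2 = (q + 1) ^ 2 :=
    fun c hc => by rw [if_pos (mem_range.1 hc)]
  have hhigh : ∀ c ∈ range m, (q + if r + c < r then 1 else 0) ^ 2 = q ^ 2 :=
    fun c _ => by rw [if_neg (by omega), add_zero]
  rw [sum_range_add, sum_congr rfl hlow, sum_congr rfl hhigh]
  simp

theorem Fin.card_filter_val_mod_eq_val_mod {k : ℕ} (hk : 0 < k) (n : ℕ) :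
    #{p : Fin n × Fin n | (p.1 : ℕ) % k = p.2 % k} = n / k * n + (n / k + 1) * (n % k) := by
  rw [card_filter_apply_eq_apply_eq_sum_sq (fun i : Fin n => (i : ℕ) % k) (range k)
    fun i => mem_range.2 (Nat.mod_lt _ hk)]
  have hfiber : ∀ c ∈ range k,
      #{i : Fin n | (i : ℕ) % k = c} = n / k + if c < n % k then 1 else 0 := by
    intro c hc
    rw [← Nat.mod_eq_of_lt (mem_range.1 hc), ← Nat.count_modEq_card n hk,
      ← Fin.card_filter_univ_val_eq_count]
    rfl
  have hn : n = n / k * k + n % k := (Nat.div_add_mod' n k).symm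
  obtain ⟨m, hm⟩ := Nat.exists_eq_add_of_le (Nat.mod_lt n hk).le
  set q := n / k
  set r := n % k
  rw [sum_congr rfl fun c hc => by rw [hfiber c hc], hm, sum_range_add_sq_ite_lt, hn, hm]
  ring

/-- Let `k ≥ 1`, `n ≥ 1`, and write `n = q * k + r` with `0 ≤ r < k`. Let
`ω ∈ ℂ` be a primitive `k`-th root of unity and `D` the `n × n` diagonal matrix with entries
`ω^i`, `i = 0, …, n-1`. Then the space of trace-zero matrices commuting with `D` has
dimension `q * n + (q + 1) * r - 1`. -/
theorem stmt_9
    (k n q r : ℕ) (hk : 1 ≤ k) (hn : 1 ≤ n) (hdiv : n = q * k + r) (hr : r < k)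
    (ω : ℂ) (hω : IsPrimitiveRoot ω k)
    (D : Matrix (Fin n) (Fin n) ℂ) (hD : D = Matrix.diagonal fun i : Fin n => ω ^ (i : ℕ)) :
    (Module.finrank ℂ
        ↥(LinearMap.ker (Matrix.traceLinearMap (Fin n) ℂ ℂ)
          ⊓ LinearMap.ker (LinearMap.mulLeft ℂ D - LinearMap.mulRight ℂ D)) : ℤ)
      = q * n + (q + 1) * r - 1 := by
  classical
  obtain ⟨hq, hr⟩ : n / k = q ∧ n % k = r :=
    (Nat.div_mod_unique hk).2 ⟨by rw [hdiv]; ring, hr⟩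
  have hcommutant : finrank ℂ (ker (mulLeft ℂ D - mulRight ℂ D)) = q * n + (q + 1) * r := by
    rw [hD, finrank_ker_mulLeft_sub_mulRight_diagonal, ← hq, ← hr,
      ← Fin.card_filter_val_mod_eq_val_mod hk]
    simp_rw [(hω.isOfFinOrder (by omega)).pow_inj_mod, ← hω.eq_orderOf]
  have hone : (1 : Matrix (Fin n) (Fin n) ℂ) ∈ ker (mulLeft ℂ D - mulRight ℂ D) := by
    simp
  have htrace : traceLinearMap (Fin n) ℂ ℂ 1 ≠ 0 := by
    simp only [traceLinearMap_apply, Matrix.trace_one, Fintype.card_fin, ne_eq, Nat.cast_eq_zero]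
    omega
  have hdim := Module.Dual.finrank_inf_ker_add_one _ hone htrace
  rw [hcommutant] at hdim
  zify at hdim
  linarith
end

section
/- Let m ≥ 1 and k ≥ 1 be integers, write 2m = q·k + r with 0 ≤ r < k, and let ζ ∈ ℂ be a primitive 2k-th root of unity. Let J be the 2m×2m complex matrix with entries J_{ij} = (−1)^i if i + j = 2m − 1 and J_{ij} = 0 otherwise (indices 0 ≤ i, j ≤ 2m−1), let sp(J) = { X ∈ M_{2m}(ℂ) : Xᵗ·J + J·X = 0 }, and let D be the diagonal matrix with entries D_{ii} = ζ^{2m−1−2i} (integer powers) for i = 0, …, 2m−1. Then 2 · dim { X ∈ sp(J) : D·X = X·D } = 2m·q + (q+1)·r + e, where e = 2·⌊(q+1)/2⌋ if k is odd and e = 0 if k is even. -/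
/-!
Write `n = 2m`. Since `J² = -1`, `sp(J)` is the fixed space of the involution `τ X = J Xᵀ J`, and
`X` commutes with `D` exactly when it is fixed by the projection `P` killing the entries `X i j`
with `i ≢ j [MOD k]` (two eigenvalues `ζ^(n-1-2i)` agree iff their indices agree mod `k`).
`P` and `τ` commute, so `½ P (1 + τ)` projects onto the intersection and
`2 dim = tr P + tr (P τ)`. Here `tr P` counts the pairs `i ≡ j [MOD k]`, which is `n q + (q+1) r`,
and `tr (P τ)` counts the `i` with `i ≡ n - 1 - i [MOD k]`. There is no such `i` when `k` is even;
when `k` is odd they form one residue class, of size `q` or `q + 1`, and their number is even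
because `i ↦ n - 1 - i` permutes them without fixed points.
-/

open Finset

theorem Module.End.two_mul_finrank_ker_inf_ker_eq_trace_add_trace {K M : Type*} [Field K]
    [CharZero K] [AddCommGroup M] [Module K M] [FiniteDimensional K M] {P τ : Module.End K M}
    (hP : IsIdempotentElem P) (hτ : τ * τ = 1) (hPτ : Commute P τ) :
    (2 * Module.finrank K ↥(LinearMap.ker (τ - 1) ⊓ LinearMap.ker (P - 1)) : K) =
      LinearMap.trace K M P + LinearMap.trace K M (P * τ) := by
  have hτP : (τ - 1) * (P * (1 + τ)) = 0 :=
    calc (τ - 1) * (P * (1 + τ)) = τ * P * (1 + τ) - P * (1 + τ) := by noncomm_ring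
      _ = P * (τ * τ + τ) - P * (1 + τ) := by rw [← hPτ.eq]; noncomm_ring
      _ = 0 := by rw [hτ, add_comm, sub_self]
  have hPP : (P - 1) * (P * (1 + τ)) = 0 := by
    rw [← mul_assoc, sub_mul, hP.eq, one_mul, sub_self, zero_mul]
  have hproj : LinearMap.IsProj (LinearMap.ker (τ - 1) ⊓ LinearMap.ker (P - 1))
      ((2⁻¹ : K) • (P * (1 + τ))) := by
    refine ⟨fun x => ?_, fun x hx => ?_⟩
    · simp only [Submodule.mem_inf, LinearMap.mem_ker, ← Module.End.mul_apply, mul_smul_comm,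
        hτP, hPP, smul_zero, LinearMap.zero_apply, and_self]
    · simp only [Submodule.mem_inf, LinearMap.mem_ker, LinearMap.sub_apply, Module.End.one_apply,
        sub_eq_zero] at hx
      rw [LinearMap.smul_apply, Module.End.mul_apply, LinearMap.add_apply, Module.End.one_apply,
        hx.1, ← two_smul K x, map_smul, hx.2, smul_smul, inv_mul_cancel₀ two_ne_zero, one_smul]
  have htrace := hproj.trace
  rw [map_smul, mul_add, mul_one, map_add, smul_eq_mul] at htrace
  rw [← htrace]
  field_simp

theorem LinearMap.trace_eq_sum_single_apply {R ι : Type*} [CommRing R] [Fintype ι] [DecidableEq ι]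
    (f : Module.End R (Matrix ι ι R)) :
    LinearMap.trace R _ f = ∑ i, ∑ j, f (Matrix.single i j 1) i j := by
  rw [trace_eq_matrix_trace R (Matrix.stdBasis R ι ι), Matrix.trace, Fintype.sum_prod_type]
  simp [toMatrix_apply, Matrix.stdBasis, Matrix.single_eq_of_single_single]

theorem IsPrimitiveRoot.zpow_sub_two_mul_eq_iff {K : Type*} [Field K] {ζ : K} {k : ℕ} (hk : 0 < k)
    (hζ : IsPrimitiveRoot ζ (2 * k)) (c : ℤ) (a b : ℕ) :
    ζ ^ (c - 2 * (a : ℤ)) = ζ ^ (c - 2 * (b : ℤ)) ↔ a ≡ b [MOD k] := by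
  have hζ0 : ζ ≠ 0 := hζ.ne_zero (by omega)
  rw [← div_eq_one_iff_eq (zpow_ne_zero _ hζ0), ← zpow_sub₀ hζ0,
    show c - 2 * (a : ℤ) - (c - 2 * (b : ℤ)) = 2 * ((b : ℤ) - a) by ring,
    hζ.zpow_eq_one_iff_dvd, Nat.cast_mul, Nat.cast_two,
    mul_dvd_mul_iff_left two_ne_zero, Nat.modEq_iff_dvd]

theorem Fin.val_rev_modEq_val_rev_iff {n k : ℕ} (i j : Fin n) :
    (i.rev : ℕ) ≡ j.rev [MOD k] ↔ (j : ℕ) ≡ i [MOD k] := by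
  have hi := i.isLt
  have hj := j.isLt
  rw [Nat.modEq_iff_dvd, Nat.modEq_iff_dvd, Fin.val_rev, Fin.val_rev,
    show ((n - (j + 1) : ℕ) : ℤ) - (n - (i + 1) : ℕ) = (i : ℤ) - j by omega]

theorem Fin.neg_one_pow_val_rev {R : Type*} [Ring R] {n : ℕ} (hn : Even n) (i : Fin n) :
    (-1 : R) ^ (i.rev : ℕ) = -(-1) ^ (i : ℕ) := by
  have hodd : Odd ((i.rev : ℕ) + i) := by
    obtain ⟨t, ht⟩ := hn
    exact ⟨t - 1, by rw [Fin.val_rev]; omega⟩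
  calc (-1 : R) ^ (i.rev : ℕ) = (-1) ^ ((i.rev : ℕ) + i) * (-1) ^ (i : ℕ) := by
        rw [pow_add, mul_assoc, ← pow_add, ← two_mul, pow_mul, neg_one_sq, one_pow, mul_one]
    _ = -(-1) ^ (i : ℕ) := by rw [hodd.neg_one_pow, neg_one_mul]

namespace Nat

theorem card_filter_mod_lt_mod (n : ℕ) {k : ℕ} (hk : 0 < k) :
    #{i ∈ range n | i % k < n % k} = (n / k + 1) * (n % k) := by
  rw [card_eq_sum_card_fiberwise (f := (· % k)) (t := range (n % k)) (fun i hi => by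
    simpa using (mem_filter.1 hi).2)]
  have hfiber (c) (hc : c ∈ range (n % k)) :
      #{i ∈ {i ∈ range n | i % k < n % k} | i % k = c} = n / k + 1 := by
    have hcr := mem_range.1 hc
    have hck : c % k = c := mod_eq_of_lt (hcr.trans (mod_lt n hk))
    have hclass (i) (_ : i ∈ range n) : i % k < n % k ∧ i % k = c ↔ i ≡ c [MOD k] := by
      rw [Nat.ModEq, hck]
      exact ⟨And.right, fun h => ⟨h ▸ hcr, h⟩⟩
    rw [filter_filter, filter_congr hclass, ← count_eq_card_filter_range, count_modEq_card n hk,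
      hck, if_pos hcr]
  rw [sum_congr rfl hfiber, sum_const, card_range, smul_eq_mul, mul_comm]

theorem sum_count_modEq (n : ℕ) {k : ℕ} (hk : 0 < k) :
    ∑ i ∈ range n, count (· ≡ i [MOD k]) n = n * (n / k) + (n / k + 1) * (n % k) := by
  simp only [count_modEq_card n hk, sum_add_distrib, sum_const, card_range, smul_eq_mul,
    sum_boole, Nat.cast_id, card_filter_mod_lt_mod n hk]

theorem even_count_modEq_reflect {n : ℕ} (hn : Even n) (k : ℕ) :
    Even (count (fun i => i ≡ n - (i + 1) [MOD k]) n) := by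
  obtain ⟨t, rfl⟩ := hn
  rw [count_eq_card_filter_range, ← ZMod.natCast_eq_zero_iff_even, card_eq_sum_ones, cast_sum]
  refine sum_involution (fun i _ => t + t - (i + 1)) (fun _ _ => rfl) (fun i hi _ => ?_)
    (fun i hi => ?_) (fun i hi => ?_)
  all_goals simp only [mem_filter, mem_range] at hi
  · omega
  · refine mem_filter.2 ⟨mem_range.2 (by omega), ?_⟩
    rw [show t + t - (t + t - (i + 1) + 1) = i by omega]
    exact hi.2.symm
  · omega

theorem exists_modEq_reflect_iff_of_odd {k : ℕ} (hk : Odd k) (n : ℕ) :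
    ∃ c, ∀ i < n, i ≡ n - (i + 1) [MOD k] ↔ i ≡ c [MOD k] := by
  have hco := Nat.coprime_two_right.2 hk
  obtain ⟨j, rfl⟩ := hk
  refine ⟨(n - 1) * (j + 1), fun i hi => ?_⟩
  have hc : 2 * ((n - 1) * (j + 1)) ≡ n - 1 [MOD 2 * j + 1] := by
    rw [Nat.ModEq, show 2 * ((n - 1) * (j + 1)) = n - 1 + (2 * j + 1) * (n - 1) by ring,
      add_mul_mod_self_left]
  calc i ≡ n - (i + 1) [MOD 2 * j + 1] ↔ i + i ≡ i + (n - (i + 1)) [MOD 2 * j + 1] :=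
        (ModEq.add_iff_left rfl).symm
    _ ↔ 2 * i ≡ 2 * ((n - 1) * (j + 1)) [MOD 2 * j + 1] := by
        rw [← two_mul, show i + (n - (i + 1)) = n - 1 by omega]
        exact ⟨fun h => h.trans hc.symm, fun h => h.trans hc⟩
    _ ↔ i ≡ (n - 1) * (j + 1) [MOD 2 * j + 1] :=
        ⟨ModEq.cancel_left_of_coprime hco, ModEq.mul_left 2⟩

theorem count_modEq_reflect {n : ℕ} (hn : Even n) {k : ℕ} (hk : 0 < k) :
    count (fun i => i ≡ n - (i + 1) [MOD k]) n = if Odd k then 2 * ((n / k + 1) / 2) else 0 := by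
  split_ifs with hodd
  · obtain ⟨c, hc⟩ := exists_modEq_reflect_iff_of_odd hodd n
    have hcount : count (fun i => i ≡ n - (i + 1) [MOD k]) n = count (· ≡ c [MOD k]) n := by
      rw [count_eq_card_filter_range, count_eq_card_filter_range]
      exact congrArg card (filter_congr fun i hi => hc i (mem_range.1 hi))
    have heven := even_count_modEq_reflect hn k
    rw [hcount, count_modEq_card n hk] at heven ⊢
    obtain ⟨s, hs⟩ := heven
    split_ifs at hs ⊢ <;> omega
  · rw [count_eq_card_filter_range, Finset.card_eq_zero, filter_eq_empty_iff]
    intro i hi hmod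
    have h2 := hmod.of_dvd (even_iff_two_dvd.1 (not_odd_iff_even.1 hodd))
    obtain ⟨t, rfl⟩ := hn
    simp only [mem_range] at hi
    unfold Nat.ModEq at h2
    omega

end Nat

namespace Matrix

def antidiagSign (R : Type*) [Ring R] (n : ℕ) : Matrix (Fin n) (Fin n) R :=
  of fun i j => if (i : ℕ) + (j : ℕ) = n - 1 then (-1) ^ (i : ℕ) else 0

variable {R : Type*} [CommRing R] {n : ℕ}

theorem antidiagSign_apply (i j : Fin n) :
    antidiagSign R n i j = if j = i.rev then (-1 : R) ^ (i : ℕ) else 0 := by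
  have : (i : ℕ) + j = n - 1 ↔ j = i.rev := by rw [Fin.ext_iff, Fin.val_rev]; omega
  simp only [antidiagSign, of_apply, this]

theorem antidiagSign_mul_apply (X : Matrix (Fin n) (Fin n) R) (i j : Fin n) :
    (antidiagSign R n * X) i j = (-1) ^ (i : ℕ) * X i.rev j := by
  simp only [mul_apply, antidiagSign_apply, ite_mul, zero_mul, sum_ite_eq', mem_univ, if_true]

theorem mul_antidiagSign_apply (X : Matrix (Fin n) (Fin n) R) (i j : Fin n) :
    (X * antidiagSign R n) i j = X i j.rev * (-1) ^ (j.rev : ℕ) := by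
  have hrev (l : Fin n) : j = l.rev ↔ l = j.rev := by rw [eq_comm, Fin.rev_eq_iff]
  simp only [mul_apply, antidiagSign_apply, hrev, mul_ite, mul_zero, sum_ite_eq', mem_univ,
    if_true]

theorem antidiagSign_mul_self (hn : Even n) : antidiagSign R n * antidiagSign R n = -1 := by
  ext i j
  rw [antidiagSign_mul_apply, antidiagSign_apply, Fin.rev_rev, Fin.neg_one_pow_val_rev hn]
  by_cases h : j = i <;> simp [h, Ne.symm, ← pow_add]

theorem transpose_antidiagSign (hn : Even n) : (antidiagSign R n)ᵀ = -antidiagSign R n := by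
  ext i j
  rw [transpose_apply, neg_apply, antidiagSign_apply, antidiagSign_apply]
  by_cases h : j = i.rev
  · rw [if_pos h, if_pos (by rw [h, Fin.rev_rev]), h, Fin.neg_one_pow_val_rev hn]
  · rw [if_neg h, if_neg (fun h' => h (by rw [h', Fin.rev_rev])), neg_zero]

def spInvolution (n : ℕ) : Module.End R (Matrix (Fin n) (Fin n) R) where
  toFun X := antidiagSign R n * Xᵀ * antidiagSign R n
  map_add' X Y := by rw [transpose_add, Matrix.mul_add, Matrix.add_mul]
  map_smul' c X := by rw [transpose_smul, Matrix.mul_smul, Matrix.smul_mul, RingHom.id_apply]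

theorem spInvolution_apply (X : Matrix (Fin n) (Fin n) R) :
    spInvolution n X = antidiagSign R n * Xᵀ * antidiagSign R n := rfl

theorem spInvolution_apply_apply (X : Matrix (Fin n) (Fin n) R) (i j : Fin n) :
    spInvolution n X i j = (-1) ^ (i : ℕ) * X j.rev i.rev * (-1) ^ (j.rev : ℕ) := by
  rw [spInvolution_apply, Matrix.mul_assoc, antidiagSign_mul_apply, mul_antidiagSign_apply,
    transpose_apply, mul_assoc]

theorem spInvolution_mul_self (hn : Even n) :
    spInvolution n * spInvolution n = (1 : Module.End R (Matrix (Fin n) (Fin n) R)) := by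
  ext1 X
  simp only [Module.End.mul_apply, spInvolution_apply, transpose_mul, transpose_transpose,
    transpose_antidiagSign hn, Module.End.one_apply]
  simp only [Matrix.mul_assoc, Matrix.neg_mul, Matrix.mul_neg, neg_neg]
  simp [← Matrix.mul_assoc, antidiagSign_mul_self hn]

theorem transpose_mul_add_mul_eq_zero_iff (hn : Even n) (X : Matrix (Fin n) (Fin n) R) :
    Xᵀ * antidiagSign R n + antidiagSign R n * X = 0 ↔ spInvolution n X = X := by
  rw [spInvolution_apply, Matrix.mul_assoc]
  constructor
  · intro h
    rw [eq_neg_of_add_eq_zero_left h, Matrix.mul_neg, ← Matrix.mul_assoc, antidiagSign_mul_self hn]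
    simp
  · intro h
    nth_rewrite 2 [← h]
    rw [← Matrix.mul_assoc, ← Matrix.mul_assoc, antidiagSign_mul_self hn]
    simp

theorem ker_mulRight_comp_transpose_add_mulLeft_antidiagSign (hn : Even n) :
    LinearMap.ker (LinearMap.mulRight R (antidiagSign R n) ∘ₗ
        (transposeLinearEquiv (Fin n) (Fin n) R R).toLinearMap +
          LinearMap.mulLeft R (antidiagSign R n)) =
      LinearMap.ker (spInvolution n - 1) := by
  ext X
  rw [LinearMap.mem_ker, LinearMap.mem_ker, LinearMap.sub_apply, Module.End.one_apply, sub_eq_zero,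
    ← transpose_mul_add_mul_eq_zero_iff hn]
  rfl

variable (n) in
def modEqMask (k : ℕ) : Module.End R (Matrix (Fin n) (Fin n) R) where
  toFun X := of fun i j => if (i : ℕ) ≡ j [MOD k] then X i j else 0
  map_add' X Y := by ext i j; simp only [of_apply, add_apply]; split_ifs <;> simp
  map_smul' c X := by ext i j; simp only [of_apply, smul_apply]; split_ifs <;> simp

theorem modEqMask_apply_apply (k : ℕ) (X : Matrix (Fin n) (Fin n) R) (i j : Fin n) :
    modEqMask n k X i j = if (i : ℕ) ≡ j [MOD k] then X i j else 0 := rfl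

theorem isIdempotentElem_modEqMask (k : ℕ) : IsIdempotentElem (modEqMask (R := R) n k) := by
  ext X i j
  simp only [Module.End.mul_apply, modEqMask_apply_apply]
  split_ifs <;> rfl

theorem modEqMask_eq_self_iff (k : ℕ) (X : Matrix (Fin n) (Fin n) R) :
    modEqMask n k X = X ↔ ∀ i j : Fin n, ¬ (i : ℕ) ≡ j [MOD k] → X i j = 0 := by
  simp only [← Matrix.ext_iff, modEqMask_apply_apply]
  refine forall₂_congr fun i j => ?_
  by_cases h : (i : ℕ) ≡ j [MOD k] <;> simp [h, eq_comm]

theorem diagonal_mul_sub_mul_diagonal_eq_zero_iff {ι : Type*} [Fintype ι] [DecidableEq ι]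
    [NoZeroDivisors R] (d : ι → R) (X : Matrix ι ι R) :
    diagonal d * X - X * diagonal d = 0 ↔ ∀ i j, d i ≠ d j → X i j = 0 := by
  simp only [sub_eq_zero, ← Matrix.ext_iff, diagonal_mul, mul_diagonal]
  refine forall₂_congr fun i j => ?_
  rw [← sub_eq_zero, mul_comm (X i j), ← sub_mul, mul_eq_zero, sub_eq_zero, or_iff_not_imp_left]

theorem ker_mulLeft_sub_mulRight_diagonal [NoZeroDivisors R] {k : ℕ} {d : Fin n → R}
    (hd : ∀ i j : Fin n, d i = d j ↔ (i : ℕ) ≡ j [MOD k]) :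
    LinearMap.ker (LinearMap.mulLeft R (diagonal d) - LinearMap.mulRight R (diagonal d)) =
      LinearMap.ker (modEqMask n k - 1) := by
  ext X
  rw [LinearMap.mem_ker, LinearMap.mem_ker, LinearMap.sub_apply, LinearMap.sub_apply,
    Module.End.one_apply, sub_eq_zero (b := X), modEqMask_eq_self_iff]
  exact (diagonal_mul_sub_mul_diagonal_eq_zero_iff d X).trans
    (forall₂_congr fun i j => imp_congr_left (hd i j).not)

theorem commute_modEqMask_spInvolution (k : ℕ) :
    Commute (modEqMask (R := R) n k) (spInvolution n) := by
  ext X i j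
  simp only [Module.End.mul_apply, modEqMask_apply_apply, spInvolution_apply_apply,
    Fin.val_rev_modEq_val_rev_iff]
  split_ifs <;> simp

theorem trace_modEqMask (k : ℕ) :
    LinearMap.trace R _ (modEqMask n k) = (∑ i ∈ range n, Nat.count (· ≡ i [MOD k]) n : ℕ) := by
  rw [LinearMap.trace_eq_sum_single_apply, Nat.cast_sum, ← Fin.sum_univ_eq_sum_range]
  refine sum_congr rfl fun i _ => ?_
  rw [Nat.count_eq_card_filter_range, ← sum_boole, ← Fin.sum_univ_eq_sum_range]
  simp only [modEqMask_apply_apply, single_apply_same, Nat.ModEq.comm]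

theorem trace_modEqMask_mul_spInvolution (k : ℕ) :
    LinearMap.trace R _ (modEqMask n k * spInvolution n) =
      Nat.count (fun i => i ≡ n - (i + 1) [MOD k]) n := by
  rw [LinearMap.trace_eq_sum_single_apply, Nat.count_eq_card_filter_range, ← sum_boole,
    ← Fin.sum_univ_eq_sum_range (fun i => if i ≡ n - (i + 1) [MOD k] then (1 : R) else 0)]
  refine sum_congr rfl fun i _ => ?_
  rw [sum_eq_single i.rev]
  · simp [modEqMask_apply_apply, spInvolution_apply_apply, ← pow_add]
  · intro j _ hj
    simp [modEqMask_apply_apply, spInvolution_apply_apply, hj]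
  · simp

end Matrix

theorem stmt_13_general
    (m k q r : ℕ) (hdiv : 2 * m = q * k + r) (hr : r < k)
    (ζ : ℂ) (hζ : IsPrimitiveRoot ζ (2 * k))
    (J : Matrix (Fin (2 * m)) (Fin (2 * m)) ℂ)
    (hJ : J = fun i j : Fin (2 * m) =>
      if (i : ℕ) + (j : ℕ) = 2 * m - 1 then (-1 : ℂ) ^ (i : ℕ) else 0)
    (D : Matrix (Fin (2 * m)) (Fin (2 * m)) ℂ)
    (hD : D = Matrix.diagonal fun i : Fin (2 * m) =>
      ζ ^ ((2 * m : ℤ) - 1 - 2 * (i : ℤ))) :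
    2 * Module.finrank ℂ
        ↥(LinearMap.ker
            (LinearMap.mulRight ℂ J ∘ₗ
              (Matrix.transposeLinearEquiv (Fin (2 * m)) (Fin (2 * m)) ℂ ℂ).toLinearMap
              + LinearMap.mulLeft ℂ J)
          ⊓ LinearMap.ker (LinearMap.mulLeft ℂ D - LinearMap.mulRight ℂ D))
      = 2 * m * q + (q + 1) * r + (if Odd k then 2 * ((q + 1) / 2) else 0) := by
  have hk : 0 < k := by omega
  have hn : Even (2 * m) := even_two_mul m
  obtain ⟨rfl, rfl⟩ : 2 * m / k = q ∧ 2 * m % k = r :=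
    (Nat.div_mod_unique hk).2 ⟨by rw [hdiv]; ring, hr⟩
  have key := Module.End.two_mul_finrank_ker_inf_ker_eq_trace_add_trace
    (Matrix.isIdempotentElem_modEqMask k) (Matrix.spInvolution_mul_self (R := ℂ) hn)
    (Matrix.commute_modEqMask_spInvolution k)
  rw [Matrix.trace_modEqMask, Matrix.trace_modEqMask_mul_spInvolution, Nat.sum_count_modEq _ hk,
    Nat.count_modEq_reflect hn hk] at key
  rw [show J = Matrix.antidiagSign ℂ (2 * m) from hJ, hD,
    Matrix.ker_mulRight_comp_transpose_add_mulLeft_antidiagSign hn,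
    Matrix.ker_mulLeft_sub_mulRight_diagonal fun i j => hζ.zpow_sub_two_mul_eq_iff hk _ i j]
  exact_mod_cast key

/-- Let `m ≥ 1`, `k ≥ 1`, write `2m = q * k + r` with `0 ≤ r < k`, and let
`ζ ∈ ℂ` be a primitive `2k`-th root of unity. Let `J` be the `2m × 2m` matrix with
`J i j = (-1)^i` if `i + j = 2m - 1` and `0` otherwise, `sp(J) = {X : Xᵀ J + J X = 0}`, and
`D` the diagonal matrix with entries `ζ^(2m-1-2i)`. Then
`2 * dim {X ∈ sp(J) : D X = X D} = 2m q + (q+1) r + e`, where `e = 2⌊(q+1)/2⌋` if `k` is odd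
and `e = 0` if `k` is even. -/
theorem stmt_13
    (m k q r : ℕ) (hm : 1 ≤ m) (hk : 1 ≤ k) (hdiv : 2 * m = q * k + r) (hr : r < k)
    (ζ : ℂ) (hζ : IsPrimitiveRoot ζ (2 * k))
    (J : Matrix (Fin (2 * m)) (Fin (2 * m)) ℂ)
    (hJ : J = fun i j : Fin (2 * m) =>
      if (i : ℕ) + (j : ℕ) = 2 * m - 1 then (-1 : ℂ) ^ (i : ℕ) else 0)
    (D : Matrix (Fin (2 * m)) (Fin (2 * m)) ℂ)
    (hD : D = Matrix.diagonal fun i : Fin (2 * m) =>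
      ζ ^ ((2 * m : ℤ) - 1 - 2 * (i : ℤ))) :
    2 * Module.finrank ℂ
        ↥(LinearMap.ker
            (LinearMap.mulRight ℂ J ∘ₗ
              (Matrix.transposeLinearEquiv (Fin (2 * m)) (Fin (2 * m)) ℂ ℂ).toLinearMap
              + LinearMap.mulLeft ℂ J)
          ⊓ LinearMap.ker (LinearMap.mulLeft ℂ D - LinearMap.mulRight ℂ D))
      = 2 * m * q + (q + 1) * r + (if Odd k then 2 * ((q + 1) / 2) else 0) :=
  stmt_13_general m k q r hdiv hr ζ hζ J hJ D hD
end

section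
/- Let m ≥ 1 be an integer. Let J be the 2m×2m complex matrix with entries J_{ij} = (−1)^i if i + j = 2m − 1 and J_{ij} = 0 otherwise (indices 0 ≤ i, j ≤ 2m−1), let sp(J) = { X ∈ M_{2m}(ℂ) : Xᵗ·J + J·X = 0 }, and let E be the diagonal matrix with entries E_{ii} = (−1)^i. Then dim { X ∈ sp(J) : E·X = X·E } = m². -/
/-!
Commuting with `E = diag((-1)^i)` forces `X i j = 0` whenever `i + j` is odd. On the remaining
entries the symplectic condition `Xᵀ J + J X = 0` reads `X i j = -X (rev j) (rev i)`, and
`i ↦ rev i = 2m - 1 - i` swaps even and odd indices. Hence the odd-odd block is determined by the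
even-even block, which is an arbitrary `m × m` matrix.
-/

lemma neg_one_pow_eq_neg_one_pow_iff {R : Type*} [Ring R] (h : (-1 : R) ≠ 1) (a b : ℕ) :
    (-1 : R) ^ a = (-1 : R) ^ b ↔ (a + b) % 2 = 0 := by
  rw [← Nat.even_iff, ← neg_one_pow_eq_one_iff_even h, pow_add]
  constructor
  · intro hab
    rw [hab, ← pow_add, ← two_mul, pow_mul, neg_one_sq, one_pow]
  · intro hab
    calc (-1 : R) ^ a = (-1) ^ a * (-1) ^ b * (-1) ^ b := by
          rw [mul_assoc, ← pow_add, ← two_mul, pow_mul, neg_one_sq, one_pow, mul_one]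
      _ = (-1) ^ b := by rw [hab, one_mul]

namespace Matrix

section Antidiagonal

variable {R : Type*} [CommRing R] {n : ℕ}

def weightedAntidiagonal (s : Fin n → R) : Matrix (Fin n) (Fin n) R :=
  of fun i j => if (i : ℕ) + j = n - 1 then s i else 0

lemma weightedAntidiagonal_apply_eq_ite_rev (s : Fin n → R) (i j : Fin n) :
    weightedAntidiagonal s i j = if i.rev = j then s i else 0 := by
  have := i.isLt
  have := j.isLt
  simp only [weightedAntidiagonal, of_apply, Fin.ext_iff, Fin.val_rev]
  exact if_congr (by omega) rfl rfl

lemma weightedAntidiagonal_mul_apply (s : Fin n → R) (X : Matrix (Fin n) (Fin n) R)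
    (i j : Fin n) : (weightedAntidiagonal s * X) i j = s i * X i.rev j := by
  simp [mul_apply, weightedAntidiagonal_apply_eq_ite_rev]

lemma mul_weightedAntidiagonal_apply (s : Fin n → R) (X : Matrix (Fin n) (Fin n) R)
    (i j : Fin n) : (X * weightedAntidiagonal s) i j = X i j.rev * s j.rev := by
  simp [mul_apply, weightedAntidiagonal_apply_eq_ite_rev, Fin.rev_eq_iff]

lemma transpose_mul_weightedAntidiagonal_add_eq_zero_iff (s : Fin n → R)
    (X : Matrix (Fin n) (Fin n) R) :
    Xᵀ * weightedAntidiagonal s + weightedAntidiagonal s * X = 0 ↔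
      ∀ i j, X j.rev i.rev * s j.rev + s i.rev * X i j = 0 := by
  have entry (i j : Fin n) :
      (Xᵀ * weightedAntidiagonal s + weightedAntidiagonal s * X) i.rev j =
        X j.rev i.rev * s j.rev + s i.rev * X i j := by
    rw [add_apply, mul_weightedAntidiagonal_apply, weightedAntidiagonal_mul_apply,
      transpose_apply, Fin.rev_rev]
  constructor
  · intro h i j
    rw [← entry, h, zero_apply]
  · intro h
    ext i j
    rw [← Fin.rev_rev i, entry, h, zero_apply]

end Antidiagonal

section Centralizer

variable {ι R : Type*} [Fintype ι] [DecidableEq ι] [CommRing R]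

lemma diagonal_mul_eq_mul_diagonal_iff [NoZeroDivisors R] (d : ι → R) (X : Matrix ι ι R) :
    diagonal d * X = X * diagonal d ↔ ∀ i j, d i ≠ d j → X i j = 0 := by
  simp only [← Matrix.ext_iff, diagonal_mul, mul_diagonal, mul_comm (X _ _)]
  refine forall₂_congr fun i j => ?_
  rw [← sub_eq_zero, ← sub_mul, mul_eq_zero, sub_eq_zero]
  tauto

def symplecticCentralizer (J E : Matrix ι ι R) : Submodule R (Matrix ι ι R) :=
  LinearMap.ker (LinearMap.mulRight R J ∘ₗ (transposeLinearEquiv ι ι R R).toLinearMap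
      + LinearMap.mulLeft R J) ⊓
    LinearMap.ker (LinearMap.mulLeft R E - LinearMap.mulRight R E)

lemma mem_symplecticCentralizer {J E X : Matrix ι ι R} :
    X ∈ symplecticCentralizer J E ↔ Xᵀ * J + J * X = 0 ∧ E * X = X * E := by
  simp [symplecticCentralizer, sub_eq_zero]

end Centralizer

end Matrix

open Matrix

section PrincipalRepresentation

variable (K : Type*) [Field K] (m : ℕ)

-- The images of `J₀` and of `diag(1, -1)` under the principal representation `Sym^(2m-1)`.
def principalSymplecticForm : Matrix (Fin (2 * m)) (Fin (2 * m)) K :=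
  weightedAntidiagonal fun i => (-1) ^ (i : ℕ)

def principalReflection : Matrix (Fin (2 * m)) (Fin (2 * m)) K :=
  diagonal fun i => (-1) ^ (i : ℕ)

variable {K m}

lemma Fin.val_rev_add_val_rev_mod_two (i j : Fin (2 * m)) :
    ((i.rev : ℕ) + j.rev) % 2 = ((i : ℕ) + j) % 2 := by
  have := i.isLt
  have := j.isLt
  simp only [Fin.val_rev]
  omega

lemma mem_symplecticCentralizer_principal_iff (h : (-1 : K) ≠ 1)
    (X : Matrix (Fin (2 * m)) (Fin (2 * m)) K) :
    X ∈ symplecticCentralizer (principalSymplecticForm K m) (principalReflection K m) ↔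
      (∀ i j : Fin (2 * m), ((i : ℕ) + j) % 2 = 1 → X i j = 0) ∧
        ∀ i j, X i j = -X j.rev i.rev := by
  rw [mem_symplecticCentralizer, principalSymplecticForm, principalReflection,
    transpose_mul_weightedAntidiagonal_add_eq_zero_iff, diagonal_mul_eq_mul_diagonal_iff,
    and_comm]
  simp only [ne_eq, neg_one_pow_eq_neg_one_pow_iff h, Nat.mod_two_ne_zero]
  refine and_congr_right fun hodd => forall₂_congr fun i j => ?_
  by_cases hij : ((i : ℕ) + j) % 2 = 1
  · rw [hodd i j hij, hodd j.rev i.rev (by rwa [Fin.val_rev_add_val_rev_mod_two, add_comm])]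
    simp
  · have hsign : (-1 : K) ^ (j.rev : ℕ) = (-1) ^ (i.rev : ℕ) := by
      rw [neg_one_pow_eq_neg_one_pow_iff h, Fin.val_rev_add_val_rev_mod_two]
      omega
    have hsign_ne_zero : (-1 : K) ^ (i.rev : ℕ) ≠ 0 := pow_ne_zero _ (neg_ne_zero.2 one_ne_zero)
    rw [hsign, mul_comm, ← mul_add, mul_eq_zero, or_iff_right hsign_ne_zero, add_eq_zero_iff_eq_neg']

def evenIndex (a : Fin m) : Fin (2 * m) := ⟨2 * a, by omega⟩

def halfIndex (i : Fin (2 * m)) : Fin m := ⟨i / 2, by omega⟩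

@[simp]
lemma val_evenIndex (a : Fin m) : (evenIndex a : ℕ) = 2 * a := rfl

lemma halfIndex_evenIndex (a : Fin m) : halfIndex (evenIndex a) = a := by
  ext
  simp [halfIndex, evenIndex]

lemma evenIndex_halfIndex {i : Fin (2 * m)} (hi : (i : ℕ) % 2 = 0) :
    evenIndex (halfIndex i) = i := by
  ext
  simp only [halfIndex, evenIndex]
  omega

def evenBlockExtend (A : Matrix (Fin m) (Fin m) K) : Matrix (Fin (2 * m)) (Fin (2 * m)) K :=
  of fun i j =>
    if (i : ℕ) % 2 = 0 ∧ (j : ℕ) % 2 = 0 then A (halfIndex i) (halfIndex j)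
    else if (i : ℕ) % 2 = 1 ∧ (j : ℕ) % 2 = 1 then -A (halfIndex j.rev) (halfIndex i.rev)
    else 0

lemma evenBlockExtend_mem (h : (-1 : K) ≠ 1) (A : Matrix (Fin m) (Fin m) K) :
    evenBlockExtend A ∈
      symplecticCentralizer (principalSymplecticForm K m) (principalReflection K m) := by
  rw [mem_symplecticCentralizer_principal_iff h]
  refine ⟨fun i j hij => ?_, fun i j => ?_⟩
  · simp only [evenBlockExtend, of_apply]
    rw [if_neg (by omega), if_neg (by omega)]
  · have := i.isLt
    have := j.isLt
    have hir := Fin.val_rev i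
    have hjr := Fin.val_rev j
    simp only [evenBlockExtend, of_apply, Fin.rev_rev]
    split_ifs <;> first | omega | simp

lemma evenBlockExtend_submatrix {X : Matrix (Fin (2 * m)) (Fin (2 * m)) K}
    (hodd : ∀ i j : Fin (2 * m), ((i : ℕ) + j) % 2 = 1 → X i j = 0)
    (hrev : ∀ i j, X i j = -X j.rev i.rev) :
    evenBlockExtend (X.submatrix evenIndex evenIndex) = X := by
  ext i j
  have := i.isLt
  have := j.isLt
  have hir := Fin.val_rev i
  have hjr := Fin.val_rev j
  simp only [evenBlockExtend, of_apply, submatrix_apply]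
  split_ifs with heven hbothOdd
  · rw [evenIndex_halfIndex heven.1, evenIndex_halfIndex heven.2]
  · rw [evenIndex_halfIndex (by omega), evenIndex_halfIndex (by omega), ← hrev]
  · exact (hodd i j (by omega)).symm

variable (K m) in
def symplecticCentralizerEquivEvenBlock (h : (-1 : K) ≠ 1) :
    symplecticCentralizer (principalSymplecticForm K m) (principalReflection K m) ≃ₗ[K]
      Matrix (Fin m) (Fin m) K where
  toFun X := X.1.submatrix evenIndex evenIndex
  map_add' _ _ := rfl
  map_smul' _ _ := rfl
  invFun A := ⟨evenBlockExtend A, evenBlockExtend_mem h A⟩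
  left_inv X := by
    obtain ⟨hodd, hrev⟩ := (mem_symplecticCentralizer_principal_iff h X.1).1 X.2
    exact Subtype.ext (evenBlockExtend_submatrix hodd hrev)
  right_inv A := by
    ext a b
    simp [evenBlockExtend, halfIndex_evenIndex]

end PrincipalRepresentation

theorem stmt_14_general
    (m : ℕ)
    (J : Matrix (Fin (2 * m)) (Fin (2 * m)) ℂ)
    (hJ : J = fun i j : Fin (2 * m) =>
      if (i : ℕ) + (j : ℕ) = 2 * m - 1 then (-1 : ℂ) ^ (i : ℕ) else 0)
    (E : Matrix (Fin (2 * m)) (Fin (2 * m)) ℂ)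
    (hE : E = Matrix.diagonal fun i : Fin (2 * m) => (-1 : ℂ) ^ (i : ℕ)) :
    Module.finrank ℂ
        ↥(LinearMap.ker
            (LinearMap.mulRight ℂ J ∘ₗ
              (Matrix.transposeLinearEquiv (Fin (2 * m)) (Fin (2 * m)) ℂ ℂ).toLinearMap
              + LinearMap.mulLeft ℂ J)
          ⊓ LinearMap.ker (LinearMap.mulLeft ℂ E - LinearMap.mulRight ℂ E))
      = m ^ 2 := by
  subst hJ hE
  exact (symplecticCentralizerEquivEvenBlock ℂ m (by norm_num)).finrank_eq.trans
    (by simp [Module.finrank_matrix, sq])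

/-- Let `m ≥ 1`, `J` the `2m × 2m` matrix with `J i j = (-1)^i` if
`i + j = 2m - 1` and `0` otherwise, `sp(J) = {X : Xᵀ J + J X = 0}`, and `E` the diagonal
matrix with entries `(-1)^i`. Then `dim {X ∈ sp(J) : E X = X E} = m²`. -/
theorem stmt_14
    (m : ℕ) (hm : 1 ≤ m)
    (J : Matrix (Fin (2 * m)) (Fin (2 * m)) ℂ)
    (hJ : J = fun i j : Fin (2 * m) =>
      if (i : ℕ) + (j : ℕ) = 2 * m - 1 then (-1 : ℂ) ^ (i : ℕ) else 0)
    (E : Matrix (Fin (2 * m)) (Fin (2 * m)) ℂ)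
    (hE : E = Matrix.diagonal fun i : Fin (2 * m) => (-1 : ℂ) ^ (i : ℕ)) :
    Module.finrank ℂ
        ↥(LinearMap.ker
            (LinearMap.mulRight ℂ J ∘ₗ
              (Matrix.transposeLinearEquiv (Fin (2 * m)) (Fin (2 * m)) ℂ ℂ).toLinearMap
              + LinearMap.mulLeft ℂ J)
          ⊓ LinearMap.ker (LinearMap.mulLeft ℂ E - LinearMap.mulRight ℂ E))
      = m ^ 2 :=
  stmt_14_general m J hJ E hE
end

section
/- Consider the polynomial f(r, τ) = τ² − (r² − 2)·τ + 2r³ − 5r² + 5 over ℂ. The set of points (r, τ) ∈ ℂ² at which f and both its partial derivatives ∂f/∂τ = 2τ − r² + 2 and ∂f/∂r = −2rτ + 6r² − 10r vanish simultaneously is exactly the single point {(2, 1)}. In particular, the affine plane curve {(r, τ) ∈ ℂ² : f(r, τ) = 0} is singular precisely at (r, τ) = (2, 1). -/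
/-- Consider `f (r, τ) = τ² - (r² - 2) τ + 2 r³ - 5 r² + 5` over `ℂ`. The
set of points `(r, τ) ∈ ℂ²` where `f`, `∂f/∂τ = 2τ - r² + 2`, and
`∂f/∂r = -2 r τ + 6 r² - 10 r` vanish simultaneously is exactly `{(2, 1)}`; in particular
the curve `f = 0` is singular precisely at `(2, 1)`. -/
theorem stmt_17 :
    {p : ℂ × ℂ |
        p.2 ^ 2 - (p.1 ^ 2 - 2) * p.2 + 2 * p.1 ^ 3 - 5 * p.1 ^ 2 + 5 = 0 ∧
        2 * p.2 - p.1 ^ 2 + 2 = 0 ∧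
        -2 * p.1 * p.2 + 6 * p.1 ^ 2 - 10 * p.1 = 0}
      = {((2 : ℂ), (1 : ℂ))} := by
  ext p
  simp only [Set.mem_setOf_eq, Set.mem_singleton_iff]
  constructor
  · rintro ⟨h1, h2, h3⟩
    have hr : p.1 * (p.1 - 2) * (p.1 - 4) = 0 := by
      linear_combination -h3 - p.1 * h2
    rcases mul_eq_zero.mp hr with hr | hr4
    · rcases mul_eq_zero.mp hr with hr0 | hr2
      · rw [hr0] at h1 h2
        have h4 : (4 : ℂ) = 0 := by linear_combination h1 - (p.2 / 2 + 1 / 2) * h2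
        norm_num at h4
      · have hr2'' : p.1 = 2 := sub_eq_zero.mp hr2
        rw [hr2''] at h2
        have hτ : p.2 = 1 := by linear_combination h2 / 2
        exact Prod.ext hr2'' hτ
    · have hr4' : p.1 = 4 := sub_eq_zero.mp hr4
      rw [hr4'] at h1 h2
      have h4 : (4 : ℂ) = 0 := by linear_combination h1 - (p.2 / 2 - 7 / 2) * h2
      norm_num at h4
  · rintro rfl
    norm_num
end
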